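/- arXiv:2312.03142 — 2 statements merged into one kernel-verified Lean document; each statement's English description precedes it below -/
import Mathlib

section
/- Let G_n(α,β,W) be the heterogeneous Erdős–Rényi random graph and write Ā_{ij} = A_{ij} − p_n w_{ij}, μ_{ij} = p_n w_{ij}. For any fixed positive integer t and any vertex i, E[(Σ_{j≠k, j,k≠i} μ_{ij} Ā_{jk})^{2t}] = O((np_n)^{2t} p_n^t), uniformly over i ∈ [n]. -/
open MeasureTheory ProbabilityTheory Finset Filter

noncomputable section

/-- Edge probability `p_n = n^{-α}`. -/
def pn (α : ℝ) (n : ℕ) : ℝ := (n : ℝ) ^ (-α)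

/-- Edge mean `μ_{ij} = p_n w_{ij}` in the graph on `n` vertices. -/
def edgeP (α : ℝ) (w : ℕ → ℕ → ℕ → ℝ) (n i j : ℕ) : ℝ := pn α n * w n i j

/-- `ν_i = Σ_{j,k} p_n² w_{ij} w_{jk}`. -/
def nu (α : ℝ) (w : ℕ → ℕ → ℕ → ℝ) (n i : ℕ) : ℝ :=
  ∑ j ∈ Finset.range n, ∑ k ∈ Finset.range n, edgeP α w n i j * edgeP α w n j k

/-- Centered edge indicator `Ā_{ij} = A_{ij} - p_n w_{ij}`. -/
def Abar {Ω : ℕ → Type} (α : ℝ) (w : ℕ → ℕ → ℕ → ℝ) (A : ∀ n, ℕ → ℕ → Ω n → ℝ)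
    (n i j : ℕ) (ω : Ω n) : ℝ := A n i j ω - edgeP α w n i j

/-- The average closure coefficient `𝓗̄_n`; summands with a vanishing denominator are `0`
(real division by zero is zero). -/
def closureAvg {Ω : ℕ → Type} (A : ∀ n, ℕ → ℕ → Ω n → ℝ) (n : ℕ) (ω : Ω n) : ℝ :=
  ((n : ℝ))⁻¹ * ∑ i ∈ Finset.range n,
    (∑ j ∈ (Finset.range n).erase i, ∑ k ∈ ((Finset.range n).erase i).erase j,
        A n i j ω * A n j k ω * A n k i ω) /
    (∑ j ∈ (Finset.range n).erase i, ∑ k ∈ ((Finset.range n).erase i).erase j,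
        A n i j ω * A n j k ω)

/-- The hypotheses of the heterogeneous Erdős–Rényi random graph `G_n(α, β, W)`:
symmetric weights `w_{ij} ∈ [β,1]` (vanishing on the diagonal), and independent Bernoulli
edge indicators `A_{ij} = A_{ji} ∈ {0,1}` with `P(A_{ij} = 1) = p_n w_{ij}`. -/
structure IsHeterER (α β : ℝ) {Ω : ℕ → Type} [∀ n, MeasurableSpace (Ω n)]
    (μ : ∀ n, Measure (Ω n)) (w : ℕ → ℕ → ℕ → ℝ) (A : ∀ n, ℕ → ℕ → Ω n → ℝ) : Prop where
  alpha_mem : α ∈ Set.Ioo (0 : ℝ) 1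
  beta_mem : β ∈ Set.Ioo (0 : ℝ) 1
  prob : ∀ n, IsProbabilityMeasure (μ n)
  w_symm : ∀ n i j, w n i j = w n j i
  w_diag : ∀ n i, w n i i = 0
  w_mem : ∀ n, ∀ i ∈ Finset.range n, ∀ j ∈ Finset.range n, i ≠ j → w n i j ∈ Set.Icc β 1
  A_symm : ∀ n i j ω, A n i j ω = A n j i ω
  A_diag : ∀ n i ω, A n i i ω = 0
  A_meas : ∀ n i j, Measurable (A n i j)
  A_vals : ∀ n i j ω, A n i j ω = 0 ∨ A n i j ω = 1
  A_prob : ∀ n, ∀ i ∈ Finset.range n, ∀ j ∈ Finset.range n, i ≠ j →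
      μ n {ω | A n i j ω = 1} = ENNReal.ofReal (edgeP α w n i j)
  A_indep : ∀ n, iIndepFun
      (fun (e : {q : ℕ × ℕ // q.1 < q.2}) ω => A n e.1.1 e.1.2 ω) (μ n)

/-- `b_{ij} = Σ_k μ_{ik} μ_{jk} / ν_k`. -/
def bcoef (α : ℝ) (w : ℕ → ℕ → ℕ → ℝ) (n i j : ℕ) : ℝ :=
  ∑ k ∈ Finset.range n, edgeP α w n i k * edgeP α w n j k / nu α w n k

/-- `c_{ij} = Σ_k μ_{ik} μ_{jk} / ν_i`. -/
def ccoef (α : ℝ) (w : ℕ → ℕ → ℕ → ℝ) (n i j : ℕ) : ℝ :=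
  ∑ k ∈ Finset.range n, edgeP α w n i k * edgeP α w n j k / nu α w n i

/-- `a_s = Σ_{i,j,k} μ_{ij} μ_{jk} μ_{ki} μ_{is} / ν_i²`. -/
def acoef (α : ℝ) (w : ℕ → ℕ → ℕ → ℝ) (n s : ℕ) : ℝ :=
  ∑ i ∈ Finset.range n, ∑ j ∈ Finset.range n, ∑ k ∈ Finset.range n,
    edgeP α w n i j * edgeP α w n j k * edgeP α w n k i * edgeP α w n i s / (nu α w n i) ^ 2

/-- `e_{is} = Σ_{j,k,t} μ_{ij} μ_{jk} μ_{ki} μ_{st} / ν_i²`. -/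
def ecoef (α : ℝ) (w : ℕ → ℕ → ℕ → ℝ) (n i s : ℕ) : ℝ :=
  ∑ j ∈ Finset.range n, ∑ k ∈ Finset.range n, ∑ t ∈ Finset.range n,
    edgeP α w n i j * edgeP α w n j k * edgeP α w n k i * edgeP α w n s t / (nu α w n i) ^ 2

/-- `σ_{1n}²`. -/
def sigma1sq (α : ℝ) (w : ℕ → ℕ → ℕ → ℝ) (n : ℕ) : ℝ :=
  4 / (n : ℝ) ^ 2 * ∑ i ∈ Finset.range n, ∑ j ∈ Finset.Ioo i n, ∑ k ∈ Finset.Ioo j n,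
    ((nu α w n i)⁻¹ + (nu α w n j)⁻¹ + (nu α w n k)⁻¹) ^ 2 *
      (edgeP α w n i j * (1 - edgeP α w n i j)) *
      (edgeP α w n j k * (1 - edgeP α w n j k)) *
      (edgeP α w n k i * (1 - edgeP α w n k i))

/-- `σ_{2n}²`. -/
def sigma2sq (α : ℝ) (w : ℕ → ℕ → ℕ → ℝ) (n : ℕ) : ℝ :=
  1 / (n : ℝ) ^ 2 * ∑ i ∈ Finset.range n, ∑ j ∈ Finset.Ioo i n,
    (2 * bcoef α w n i j + 2 * ccoef α w n i j + 2 * ccoef α w n j i -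
        (acoef α w n i + acoef α w n j) - (ecoef α w n i j + ecoef α w n j i)) ^ 2 *
      (edgeP α w n i j * (1 - edgeP α w n i j))

/-- `σ_n² = σ_{1n}² + σ_{2n}²`. -/
def sigmasq (α : ℝ) (w : ℕ → ℕ → ℕ → ℝ) (n : ℕ) : ℝ :=
  sigma1sq α w n + sigma2sq α w n

/-- Convergence in distribution to the standard normal law `N(0,1)`:
the integrals of every bounded continuous function converge. -/
def TendstoGaussian {Ω : ℕ → Type} [∀ n, MeasurableSpace (Ω n)]
    (μ : ∀ n, Measure (Ω n)) (X : ∀ n, Ω n → ℝ) : Prop :=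
  ∀ f : BoundedContinuousFunction ℝ ℝ,
    Tendsto (fun n => ∫ ω, f (X n ω) ∂μ n) atTop (nhds (∫ x, f x ∂gaussianReal 0 1))

/-- The constant weights of the homogeneous Erdős–Rényi graph `G_n(α)`. -/
def erW : ℕ → ℕ → ℕ → ℝ := fun _ i j => if i = j then 0 else 1

/-- `δ_n = (log (n p_n))^{-2}`. -/
def deltaN (α : ℝ) (n : ℕ) : ℝ := ((Real.log ((n : ℝ) * pn α n)) ^ 2)⁻¹

/-- `ε_n = (log (n p_n))^{-5}`. -/
def epsN (α : ℝ) (n : ℕ) : ℝ := ((Real.log ((n : ℝ) * pn α n)) ^ 5)⁻¹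

/-- `c_n = (log (n p_n))^{-1/2}`. -/
def cN (α : ℝ) (n : ℕ) : ℝ := (Real.sqrt (Real.log ((n : ℝ) * pn α n)))⁻¹

/-- The number of 2-paths emanating from `i`: `V_i = Σ_{j,k ∉ {i}} A_{ij} A_{jk}`. -/
def twoPaths {Ω : ℕ → Type} (A : ∀ n, ℕ → ℕ → Ω n → ℝ) (n i : ℕ) (ω : Ω n) : ℝ :=
  ∑ j ∈ (Finset.range n).erase i, ∑ k ∈ (Finset.range n).erase i, A n i j ω * A n j k ω

/-- `Δ_i = Σ_{j ≠ k, j,k ≠ i} A_{ij} A_{jk} A_{ki}`, twice the number of triangles at `i`. -/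
def triCount {Ω : ℕ → Type} (A : ∀ n, ℕ → ℕ → Ω n → ℝ) (n i : ℕ) (ω : Ω n) : ℝ :=
  ∑ j ∈ (Finset.range n).erase i, ∑ k ∈ ((Finset.range n).erase i).erase j,
    A n i j ω * A n j k ω * A n k i ω

/-- Degree of vertex `i`: `d_i = Σ_j A_{ij}`. -/
def degree {Ω : ℕ → Type} (A : ∀ n, ℕ → ℕ → Ω n → ℝ) (n i : ℕ) (ω : Ω n) : ℝ :=
  ∑ j ∈ Finset.range n, A n i j ω

open MeasureTheory ProbabilityTheory Finset Filter

section AuxMLCM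
variable {Ω' : Type*} [MeasurableSpace Ω'] {μ' : Measure Ω'}

lemma aux_integrable_of_bdd [IsFiniteMeasure μ'] {g : Ω' → ℝ} (hg : Measurable g)
    (C : ℝ) (hC : ∀ ω, |g ω| ≤ C) : Integrable g μ' :=
  (integrable_const C).mono' hg.aestronglyMeasurable
    (Filter.Eventually.of_forall fun ω => by simpa [Real.norm_eq_abs] using hC ω)

lemma aux_integral_prod {ι' : Type*} [IsProbabilityMeasure μ'] {X : ι' → Ω' → ℝ}
    (hind : iIndepFun X μ') (hmeas : ∀ e, Measurable (X e)) :
    ∀ s : Finset ι', (∀ e ∈ s, ∀ ω, |X e ω| ≤ 1) →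
      ∫ ω, ∏ e ∈ s, X e ω ∂μ' = ∏ e ∈ s, ∫ ω, X e ω ∂μ' := by
  classical
  intro s
  induction s using Finset.induction_on with
  | empty => simp
  | insert a s0 ha ih =>
    intro hbdd
    have hXa : Integrable (X a) μ' :=
      aux_integrable_of_bdd (hmeas a) 1 (hbdd a (mem_insert_self _ _))
    have hbp : ∀ ω, |∏ e ∈ s0, X e ω| ≤ 1 := fun ω => by
      rw [abs_prod]
      exact prod_le_one (fun e _ => abs_nonneg _)
        (fun e he => hbdd e (mem_insert_of_mem he) ω)
    have hmp : Measurable (fun ω => ∏ e ∈ s0, X e ω) :=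
      Finset.measurable_prod _ (fun e _ => hmeas e)
    have hPint : Integrable (fun ω => ∏ e ∈ s0, X e ω) μ' :=
      aux_integrable_of_bdd hmp 1 hbp
    have hindAP : IndepFun (X a) (fun ω => ∏ e ∈ s0, X e ω) μ' := by
      have h := hind.indepFun_finset_prod_of_notMem hmeas ha
      have heq : (∏ j ∈ s0, X j) = fun ω => ∏ e ∈ s0, X e ω :=
        funext fun ω => by simp [Finset.prod_apply]
      rw [heq] at h
      exact h.symm
    have h1 : ∫ ω, (X a ω * ∏ e ∈ s0, X e ω) ∂μ' =
        (∫ ω, X a ω ∂μ') * ∫ ω, ∏ e ∈ s0, X e ω ∂μ' :=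
      hindAP.integral_fun_mul_eq_mul_integral hXa.1 hPint.1
    simp only [Finset.prod_insert ha]
    rw [h1, ih (fun e he ω => hbdd e (mem_insert_of_mem he) ω)]

end AuxMLCM
section AuxMLCM2
variable {Ω : ℕ → Type} [∀ n, MeasurableSpace (Ω n)] {α β : ℝ}
  {μ : ∀ n, Measure (Ω n)} {w : ℕ → ℕ → ℕ → ℝ} {A : ∀ n, ℕ → ℕ → Ω n → ℝ}
  (hm : IsHeterER α β μ w A)

section
variable {n : ℕ} (hn : 1 ≤ n)
include hm hn

lemma aux_pn_pos : 0 < pn α n :=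
  Real.rpow_pos_of_pos (by exact_mod_cast hn) _

lemma aux_pn_le_one : pn α n ≤ 1 :=
  Real.rpow_le_one_of_one_le_of_nonpos (by exact_mod_cast hn)
    (neg_nonpos.mpr hm.alpha_mem.1.le)

end

section
variable {n j k : ℕ} (hj : j ∈ Finset.range n) (hk : k ∈ Finset.range n) (hjk : j ≠ k)
include hm hj hk hjk

lemma aux_hn1 : 1 ≤ n := by
  rcases Finset.mem_range.mp hj with h; omega

lemma aux_w_nonneg : 0 ≤ w n j k :=
  le_trans hm.beta_mem.1.le (hm.w_mem n j hj k hk hjk).1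

lemma aux_edgeP_nonneg : 0 ≤ edgeP α w n j k :=
  mul_nonneg (aux_pn_pos hm (aux_hn1 hm hj hk hjk)).le (aux_w_nonneg hm hj hk hjk)

lemma aux_edgeP_le_pn : edgeP α w n j k ≤ pn α n := by
  have h1 := (hm.w_mem n j hj k hk hjk).2
  have := aux_pn_pos hm (aux_hn1 hm hj hk hjk)
  calc edgeP α w n j k = pn α n * w n j k := rfl
    _ ≤ pn α n * 1 := by nlinarith
    _ = pn α n := mul_one _

lemma aux_edgeP_le_one : edgeP α w n j k ≤ 1 :=
  le_trans (aux_edgeP_le_pn hm hj hk hjk) (aux_pn_le_one hm (aux_hn1 hm hj hk hjk))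

lemma aux_abs_Abar_le_one : ∀ ω, |Abar α w A n j k ω| ≤ 1 := by
  intro ω
  have h0 := aux_edgeP_nonneg hm hj hk hjk
  have h1 := aux_edgeP_le_one hm hj hk hjk
  rcases hm.A_vals n j k ω with h | h <;>
    · simp only [Abar, h]
      rw [abs_le]; constructor <;> nlinarith

lemma aux_intA : ∫ ω, A n j k ω ∂ μ n = edgeP α w n j k := by
  haveI := hm.prob n
  have hms : MeasurableSet {ω | A n j k ω = 1} := by
    have := hm.A_meas n j k
    exact this (measurableSet_singleton (1 : ℝ))
  have hfe : (fun ω => A n j k ω) =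
      Set.indicator {ω | A n j k ω = 1} (fun _ => (1 : ℝ)) := by
    funext ω
    rcases hm.A_vals n j k ω with h | h <;>
      simp [Set.indicator_apply, h, Set.mem_setOf_eq]
  rw [hfe, MeasureTheory.integral_indicator_const _ hms, measureReal_def, hm.A_prob n j hj k hk hjk,
    ENNReal.toReal_ofReal (aux_edgeP_nonneg hm hj hk hjk)]
  simp

lemma aux_intA_integrable : Integrable (fun ω => A n j k ω) (μ n) := by
  haveI := hm.prob n
  refine aux_integrable_of_bdd (hm.A_meas n j k) 1 (fun ω => ?_)
  rcases hm.A_vals n j k ω with h | h <;> simp [h]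

lemma aux_intAbar_zero : ∫ ω, Abar α w A n j k ω ∂ μ n = 0 := by
  haveI := hm.prob n
  have : (fun ω => Abar α w A n j k ω) =
      fun ω => A n j k ω - edgeP α w n j k := rfl
  rw [this, integral_sub (aux_intA_integrable hm hj hk hjk) (integrable_const _),
    aux_intA hm hj hk hjk]
  simp

lemma aux_Abar_meas : Measurable (fun ω => Abar α w A n j k ω) := by
  have := hm.A_meas n j k
  exact this.sub_const _

lemma aux_intAbar_pow_le {r : ℕ} (hr : 1 ≤ r) :
    |∫ ω, (Abar α w A n j k ω) ^ r ∂ μ n| ≤ 2 * pn α n := by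
  haveI := hm.prob n
  have hmeas := aux_Abar_meas hm hj hk hjk
  have habs := aux_abs_Abar_le_one hm hj hk hjk
  have hb : ∀ ω, |(Abar α w A n j k ω) ^ r| ≤ |Abar α w A n j k ω| := by
    intro ω
    rw [abs_pow]
    calc |Abar α w A n j k ω| ^ r ≤ |Abar α w A n j k ω| ^ 1 :=
          pow_le_pow_of_le_one (abs_nonneg _) (habs ω) hr
      _ = _ := pow_one _
  have hint1 : Integrable (fun ω => (Abar α w A n j k ω) ^ r) (μ n) :=
    aux_integrable_of_bdd (hmeas.pow_const r) 1
      (fun ω => le_trans (hb ω) (habs ω))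
  have hint2 : Integrable (fun ω => |Abar α w A n j k ω|) (μ n) :=
    aux_integrable_of_bdd hmeas.abs 1 (fun ω => by simpa using habs ω)
  calc |∫ ω, (Abar α w A n j k ω) ^ r ∂ μ n|
      ≤ ∫ ω, |(Abar α w A n j k ω) ^ r| ∂ μ n := by
        simpa [Real.norm_eq_abs] using
          norm_integral_le_integral_norm (fun ω => (Abar α w A n j k ω) ^ r) (μ := μ n)
    _ ≤ ∫ ω, |Abar α w A n j k ω| ∂ μ n := by
        refine integral_mono (hint1.abs) hint2 (fun ω => hb ω)
    _ ≤ ∫ ω, (A n j k ω + edgeP α w n j k) ∂ μ n := by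
        refine integral_mono hint2
          ((aux_intA_integrable hm hj hk hjk).add (integrable_const _)) (fun ω => ?_)
        have h0 := aux_edgeP_nonneg hm hj hk hjk
        have : |A n j k ω - edgeP α w n j k| ≤ |A n j k ω| + |edgeP α w n j k| :=
          abs_sub _ _
        rcases hm.A_vals n j k ω with h | h <;>
          · simp only [Abar]
            rw [abs_sub_le_iff]; constructor <;> nlinarith
    _ = edgeP α w n j k + edgeP α w n j k := by
        rw [integral_add (aux_intA_integrable hm hj hk hjk) (integrable_const _),
          aux_intA hm hj hk hjk, integral_const]
        simp
    _ ≤ 2 * pn α n := by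
        have := aux_edgeP_le_pn hm hj hk hjk; linarith

end
end AuxMLCM2
section AuxMLCM3
variable {Ω : ℕ → Type} [∀ n, MeasurableSpace (Ω n)] {α β : ℝ}
  {μ : ∀ n, Measure (Ω n)} {w : ℕ → ℕ → ℕ → ℝ} {A : ∀ n, ℕ → ℕ → Ω n → ℝ}

set_option linter.unusedSectionVars false

/-- Step A: rewrite the double sum as a sum over unordered edges. -/
lemma aux_stepA (hm : IsHeterER α β μ w A) (n i : ℕ) (ω : Ω n) :
    (∑ j ∈ (Finset.range n).erase i, ∑ k ∈ ((Finset.range n).erase i).erase j,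
        edgeP α w n i j * Abar α w A n j k ω)
      = ∑ e ∈ (((Finset.range n).erase i ×ˢ (Finset.range n).erase i).subtype
            (fun q : ℕ × ℕ => q.1 < q.2)),
          (edgeP α w n i e.1.1 + edgeP α w n i e.1.2) * Abar α w A n e.1.1 e.1.2 ω := by
  classical
  set s : Finset ℕ := (Finset.range n).erase i with hs
  set F : ℕ × ℕ → ℝ := fun q =>
    if q.2 ≠ q.1 then edgeP α w n i q.1 * Abar α w A n q.1 q.2 ω else 0 with hF
  have habs : ∀ j k, Abar α w A n j k ω = Abar α w A n k j ω := by
    intro j k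
    simp [Abar, edgeP, hm.A_symm n j k, hm.w_symm n j k]
  have h1 : (∑ j ∈ s, ∑ k ∈ s.erase j, edgeP α w n i j * Abar α w A n j k ω)
      = ∑ q ∈ s ×ˢ s, F q := by
    rw [Finset.sum_product]
    refine Finset.sum_congr rfl fun j hj => ?_
    rw [← Finset.filter_ne' s j, Finset.sum_filter]
  have h2 : ∑ q ∈ s ×ˢ s, F q
      = (∑ q ∈ (s ×ˢ s).filter (fun q => q.1 < q.2), F q)
        + ∑ q ∈ (s ×ˢ s).filter (fun q => ¬ q.1 < q.2), F q :=
    (Finset.sum_filter_add_sum_filter_not _ _ _).symm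
  have h3 : ∑ q ∈ (s ×ˢ s).filter (fun q => ¬ q.1 < q.2), F q
      = ∑ q ∈ (s ×ˢ s).filter (fun q => q.2 < q.1), F q := by
    refine (Finset.sum_subset ?_ ?_).symm
    · intro q hq
      rw [Finset.mem_filter] at hq ⊢
      exact ⟨hq.1, not_lt_of_gt hq.2⟩
    · intro q hq hq2
      rw [Finset.mem_filter] at hq hq2
      push_neg at hq2
      have ha := hq.2
      have hb := hq2 hq.1
      have hq12 : q.1 = q.2 := by omega
      simp [hF, hq12]
  have h4 : ∑ q ∈ (s ×ˢ s).filter (fun q => q.2 < q.1), F q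
      = ∑ q ∈ (s ×ˢ s).filter (fun q => q.1 < q.2), F q.swap := by
    refine Finset.sum_nbij' (fun q => Prod.swap q) (fun q => Prod.swap q) ?_ ?_ ?_ ?_ ?_
    · intro q hq
      rw [Finset.mem_filter, Finset.mem_product] at hq ⊢
      exact ⟨⟨hq.1.2, hq.1.1⟩, hq.2⟩
    · intro q hq
      rw [Finset.mem_filter, Finset.mem_product] at hq ⊢
      exact ⟨⟨hq.1.2, hq.1.1⟩, hq.2⟩
    · intro q _; simp
    · intro q _; simp
    · intro q _; simp
  have h5 : ∑ q ∈ (s ×ˢ s).filter (fun q => q.1 < q.2), (F q + F q.swap)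
      = ∑ q ∈ (s ×ˢ s).filter (fun q => q.1 < q.2),
          (edgeP α w n i q.1 + edgeP α w n i q.2) * Abar α w A n q.1 q.2 ω := by
    refine Finset.sum_congr rfl fun q hq => ?_
    rw [Finset.mem_filter] at hq
    have hne : q.2 ≠ q.1 := (ne_of_lt hq.2).symm
    simp only [hF, Prod.fst_swap, Prod.snd_swap, if_pos hne, if_pos hne.symm]
    rw [habs q.2 q.1]
    ring
  have h6 : ∑ e ∈ ((s ×ˢ s).subtype (fun q : ℕ × ℕ => q.1 < q.2)),
        (edgeP α w n i e.1.1 + edgeP α w n i e.1.2) * Abar α w A n e.1.1 e.1.2 ω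
      = ∑ q ∈ (s ×ˢ s).filter (fun q => q.1 < q.2),
          (edgeP α w n i q.1 + edgeP α w n i q.2) * Abar α w A n q.1 q.2 ω := by
    exact Finset.sum_subtype_eq_sum_filter
      (fun q : ℕ × ℕ => (edgeP α w n i q.1 + edgeP α w n i q.2) * Abar α w A n q.1 q.2 ω)
  rw [h1, h2, h3, h4, ← Finset.sum_add_distrib, h5, h6]
end AuxMLCM3
set_option maxHeartbeats 3200000 in
/-- `E[(Σ_{j≠k, j,k≠i} μ_{ij} Ā_{jk})^{2t}] = O((n p_n)^{2t} p_n^t)`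
uniformly in `i ∈ [n]`. -/
theorem mu_linear_centered_moment
    {Ω : ℕ → Type} [∀ n, MeasurableSpace (Ω n)] (α β : ℝ)
    (μ : ∀ n, Measure (Ω n)) (w : ℕ → ℕ → ℕ → ℝ) (A : ∀ n, ℕ → ℕ → Ω n → ℝ)
    (hmodel : IsHeterER α β μ w A) (t : ℕ) (ht : 0 < t) :
    ∃ C : ℝ, 0 < C ∧ ∃ N : ℕ, ∀ n ≥ N, ∀ i ∈ Finset.range n,
      (∫ ω, (∑ j ∈ (Finset.range n).erase i, ∑ k ∈ ((Finset.range n).erase i).erase j,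
          edgeP α w n i j * Abar α w A n j k ω) ^ (2 * t) ∂μ n) ≤
        C * ((n : ℝ) * pn α n) ^ (2 * t) * (pn α n) ^ t := by
  classical
  haveI hPM : ∀ nn, IsProbabilityMeasure (μ nn) := hmodel.prob
  have ht0 : (0:ℝ) < t := by exact_mod_cast ht
  refine ⟨((t : ℝ) + 1) * (t : ℝ) ^ (2 * t) * 2 ^ (3 * t), by positivity, 1, ?_⟩
  intro n hn i hi
  have hn1 : (1:ℝ) ≤ (n:ℝ) := by exact_mod_cast hn
  have hp0 : 0 < pn α n := aux_pn_pos hmodel hn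
  have hp1 : pn α n ≤ 1 := aux_pn_le_one hmodel hn
  set p := pn α n with hp_def
  set m := 2 * t with hmdef
  set s : Finset ℕ := (Finset.range n).erase i with hs_def
  set E : Finset {q : ℕ × ℕ // q.1 < q.2} :=
    (s ×ˢ s).subtype (fun q : ℕ × ℕ => q.1 < q.2) with hE_def
  have hsmem : ∀ x ∈ s, x ∈ Finset.range n ∧ x ≠ i := fun x hx =>
    ⟨(Finset.mem_erase.mp hx).2, (Finset.mem_erase.mp hx).1⟩
  have hEmem : ∀ e : {q : ℕ × ℕ // q.1 < q.2}, e ∈ E →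
      e.1.1 ∈ Finset.range n ∧ e.1.2 ∈ Finset.range n ∧ e.1.1 ≠ e.1.2 := by
    intro e he
    rw [hE_def, Finset.mem_subtype, Finset.mem_product] at he
    exact ⟨(hsmem _ he.1).1, (hsmem _ he.2).1, ne_of_lt e.2⟩
  set Y : {q : ℕ × ℕ // q.1 < q.2} → Ω n → ℝ :=
    fun e ω => Abar α w A n e.1.1 e.1.2 ω with hY_def
  set c : ℕ × ℕ → ℝ := fun q => edgeP α w n i q.1 + edgeP α w n i q.2 with hc_def
  have hYmeas : ∀ e, Measurable (Y e) := fun e => (hmodel.A_meas n e.1.1 e.1.2).sub_const _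
  have hYbdd : ∀ e ∈ E, ∀ ω, |Y e ω| ≤ 1 := by
    intro e he ω
    obtain ⟨h1, h2, h3⟩ := hEmem e he
    exact aux_abs_Abar_le_one hmodel h1 h2 h3 ω
  have hYzero : ∀ e ∈ E, ∫ ω, Y e ω ∂ μ n = 0 := by
    intro e he; obtain ⟨h1, h2, h3⟩ := hEmem e he
    exact aux_intAbar_zero hmodel h1 h2 h3
  have hYpow : ∀ e ∈ E, ∀ r : ℕ, 1 ≤ r → |∫ ω, (Y e ω) ^ r ∂ μ n| ≤ 2 * p := by
    intro e he r hr; obtain ⟨h1, h2, h3⟩ := hEmem e he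
    exact aux_intAbar_pow_le hmodel h1 h2 h3 hr
  have hcb : ∀ e ∈ E, 0 ≤ c e.1 ∧ c e.1 ≤ 2 * p := by
    intro e he
    obtain ⟨h1, h2, h3⟩ := hEmem e he
    have he' := he
    rw [hE_def, Finset.mem_subtype, Finset.mem_product] at he'
    have hi1 : i ≠ e.1.1 := fun h => (hsmem _ he'.1).2 h.symm
    have hi2 : i ≠ e.1.2 := fun h => (hsmem _ he'.2).2 h.symm
    constructor
    · exact add_nonneg (aux_edgeP_nonneg hmodel hi h1 hi1) (aux_edgeP_nonneg hmodel hi h2 hi2)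
    · have hb1 := aux_edgeP_le_pn hmodel hi h1 hi1
      have hb2 := aux_edgeP_le_pn hmodel hi h2 hi2
      have : c e.1 = edgeP α w n i e.1.1 + edgeP α w n i e.1.2 := rfl
      rw [this, two_mul]
      exact add_le_add hb1 hb2
  -- the pi set of functions, multiplicities, and per-function products
  set PiS := (Finset.range m).pi (fun _ => E) with hPiS_def
  set mult : (∀ a ∈ Finset.range m, {q : ℕ × ℕ // q.1 < q.2}) →
      {q : ℕ × ℕ // q.1 < q.2} → ℕ :=
    fun f e => ((Finset.range m).attach.filter (fun x => f x.1 x.2 = e)).card with hmult_def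
  set T : (∀ a ∈ Finset.range m, {q : ℕ × ℕ // q.1 < q.2}) → Ω n → ℝ :=
    fun f ω => ∏ x ∈ (Finset.range m).attach, (c (f x.1 x.2).1 * Y (f x.1 x.2) ω) with hT_def
  have hexp : ∀ ω, (∑ e ∈ E, c e.1 * Y e ω) ^ m = ∑ f ∈ PiS, T f ω := by
    intro ω
    rw [hPiS_def, hT_def, ← Finset.prod_sum (Finset.range m) (fun _ => E)
      (fun _ e => c e.1 * Y e ω), Finset.prod_const, Finset.card_range]
  have hTmeas : ∀ f, Measurable (T f) := fun f =>
    Finset.measurable_prod _ (fun x _ => measurable_const.mul (hYmeas _))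
  have hTbdd : ∀ f ∈ PiS, ∀ ω, |T f ω| ≤ 2 ^ m := by
    intro f hf ω
    have hfx : ∀ x : {x // x ∈ Finset.range m}, f x.1 x.2 ∈ E :=
      fun x => Finset.mem_pi.mp hf x.1 x.2
    have : T f ω = ∏ x ∈ (Finset.range m).attach, (c (f x.1 x.2).1 * Y (f x.1 x.2) ω) := rfl
    rw [this, Finset.abs_prod]
    calc ∏ x ∈ (Finset.range m).attach, |c (f x.1 x.2).1 * Y (f x.1 x.2) ω|
        ≤ ∏ _x ∈ (Finset.range m).attach, (2:ℝ) := by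
          refine Finset.prod_le_prod (fun x _ => abs_nonneg _) (fun x _ => ?_)
          rw [abs_mul]
          have h1 := (hcb _ (hfx x)).1
          have h2 := (hcb _ (hfx x)).2
          have h3 := hYbdd _ (hfx x) ω
          have h4 : |c (f x.1 x.2).1| ≤ 2 * p := by rwa [abs_of_nonneg h1]
          nlinarith [abs_nonneg (Y (f x.1 x.2) ω), abs_nonneg (c (f x.1 x.2).1)]
      _ = 2 ^ m := by rw [Finset.prod_const, Finset.card_attach, Finset.card_range]
  have hTint : ∀ f ∈ PiS, Integrable (T f) (μ n) := fun f hf =>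
    aux_integrable_of_bdd (hTmeas f) _ (hTbdd f hf)
  have hswap : ∫ ω, (∑ e ∈ E, c e.1 * Y e ω) ^ m ∂ μ n
      = ∑ f ∈ PiS, ∫ ω, T f ω ∂ μ n := by
    rw [show (fun ω => (∑ e ∈ E, c e.1 * Y e ω) ^ m) = fun ω => ∑ f ∈ PiS, T f ω from
      funext hexp]
    exact integral_finset_sum PiS hTint
  -- per-f evaluation
  have hfibprod : ∀ f ∈ PiS, ∀ ω, ∏ x ∈ (Finset.range m).attach, Y (f x.1 x.2) ω
      = ∏ e ∈ E, (Y e ω) ^ (mult f e) := by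
    intro f hf ω
    have hfx : ∀ x : {x // x ∈ Finset.range m}, f x.1 x.2 ∈ E :=
      fun x => Finset.mem_pi.mp hf x.1 x.2
    rw [← Finset.prod_fiberwise_of_maps_to (g := fun x : {x // x ∈ Finset.range m} => f x.1 x.2)
      (t := E) (fun x _ => hfx x) (fun x => Y (f x.1 x.2) ω)]
    refine Finset.prod_congr rfl fun e he => ?_
    rw [Finset.prod_congr rfl (fun x hx => by rw [(Finset.mem_filter.mp hx).2] :
      ∀ x ∈ (Finset.range m).attach.filter (fun x => f x.1 x.2 = e),
        Y (f x.1 x.2) ω = Y e ω), Finset.prod_const]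
  have hIf : ∀ f ∈ PiS, ∫ ω, ∏ e ∈ E, (Y e ω) ^ (mult f e) ∂ μ n
      = ∏ e ∈ E, ∫ ω, (Y e ω) ^ (mult f e) ∂ μ n := by
    intro f hf
    have hind : iIndepFun
        (fun e ω => (Y e ω) ^ (mult f e)) (μ n) := by
      have h := (hmodel.A_indep n).comp
        (g := fun (e : {q : ℕ × ℕ // q.1 < q.2}) (x : ℝ) =>
          (x - edgeP α w n e.1.1 e.1.2) ^ (mult f e))
        (fun e => (measurable_id.sub_const _).pow_const _)
      exact h
    exact aux_integral_prod hind (fun e => (hYmeas e).pow_const _) E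
      (fun e he ω => by
        rw [abs_pow]
        exact pow_le_one₀ (abs_nonneg _) (hYbdd e he ω))
  have hTval : ∀ f ∈ PiS, ∫ ω, T f ω ∂ μ n
      = (∏ x ∈ (Finset.range m).attach, c (f x.1 x.2).1)
        * ∏ e ∈ E, ∫ ω, (Y e ω) ^ (mult f e) ∂ μ n := by
    intro f hf
    have h1 : (fun ω => T f ω) = fun ω =>
        (∏ x ∈ (Finset.range m).attach, c (f x.1 x.2).1) * ∏ e ∈ E, (Y e ω) ^ (mult f e) := by
      funext ω
      have : T f ω = ∏ x ∈ (Finset.range m).attach,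
          (c (f x.1 x.2).1 * Y (f x.1 x.2) ω) := rfl
      rw [this, Finset.prod_mul_distrib, hfibprod f hf ω]
    rw [h1, integral_const_mul, hIf f hf]
  -- bounds
  have hcprod : ∀ f ∈ PiS, |∏ x ∈ (Finset.range m).attach, c (f x.1 x.2).1| ≤ (2*p)^m := by
    intro f hf
    have hfx : ∀ x : {x // x ∈ Finset.range m}, f x.1 x.2 ∈ E :=
      fun x => Finset.mem_pi.mp hf x.1 x.2
    rw [Finset.abs_prod]
    calc ∏ x ∈ (Finset.range m).attach, |c (f x.1 x.2).1|
        ≤ ∏ _x ∈ (Finset.range m).attach, (2*p) := by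
          refine Finset.prod_le_prod (fun x _ => abs_nonneg _) (fun x _ => ?_)
          rw [abs_of_nonneg (hcb _ (hfx x)).1]
          exact (hcb _ (hfx x)).2
      _ = (2*p)^m := by rw [Finset.prod_const, Finset.card_attach, Finset.card_range]
  have hmultsum : ∀ f ∈ PiS, ∑ e ∈ E, mult f e = m := by
    intro f hf
    have hfx : ∀ x ∈ (Finset.range m).attach, f x.1 x.2 ∈ E :=
      fun x _ => Finset.mem_pi.mp hf x.1 x.2
    have h := Finset.card_eq_sum_card_fiberwise hfx
    rw [Finset.card_attach, Finset.card_range] at h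
    exact h.symm
  have hIbound : ∀ f ∈ PiS, |∏ e ∈ E, ∫ ω, (Y e ω) ^ (mult f e) ∂ μ n|
      ≤ (2*p) ^ ((E.filter (fun e => 0 < mult f e)).card) := by
    intro f hf
    rw [Finset.abs_prod]
    calc ∏ e ∈ E, |∫ ω, (Y e ω) ^ (mult f e) ∂ μ n|
        ≤ ∏ e ∈ E, (if 0 < mult f e then 2*p else 1) := by
          refine Finset.prod_le_prod (fun e _ => abs_nonneg _) (fun e he => ?_)
          by_cases hme : 0 < mult f e
          · rw [if_pos hme]; exact hYpow e he _ hme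
          · rw [if_neg hme]
            have h0 : mult f e = 0 := by omega
            simp [h0]
      _ = (2*p) ^ ((E.filter (fun e => 0 < mult f e)).card) := by
          rw [Finset.prod_ite, Finset.prod_const, Finset.prod_const, one_pow, mul_one]
  have hIzero : ∀ f ∈ PiS, t < (E.filter (fun e => 0 < mult f e)).card →
      ∏ e ∈ E, ∫ ω, (Y e ω) ^ (mult f e) ∂ μ n = 0 := by
    intro f hf hcard
    have hex : ∃ e ∈ E, mult f e = 1 := by
      by_contra hno
      push_neg at hno
      have h2 : ∀ e ∈ E.filter (fun e => 0 < mult f e), 2 ≤ mult f e := by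
        intro e he
        have ha := (Finset.mem_filter.mp he).2
        have hb := hno e (Finset.mem_filter.mp he).1
        omega
      have hsum : 2 * (E.filter (fun e => 0 < mult f e)).card ≤ ∑ e ∈ E, mult f e := by
        calc 2 * (E.filter (fun e => 0 < mult f e)).card
            = ∑ _e ∈ E.filter (fun e => 0 < mult f e), 2 := by
              rw [Finset.sum_const, smul_eq_mul, mul_comm]
          _ ≤ ∑ e ∈ E.filter (fun e => 0 < mult f e), mult f e := Finset.sum_le_sum h2
          _ ≤ ∑ e ∈ E, mult f e :=
              Finset.sum_le_sum_of_subset (Finset.filter_subset _ _)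
      rw [hmultsum f hf] at hsum
      omega
    obtain ⟨e, he, hme⟩ := hex
    refine Finset.prod_eq_zero he ?_
    simp only [hme, pow_one]
    exact hYzero e he
  -- the bound function on supports
  set B : Finset {q : ℕ × ℕ // q.1 < q.2} → ℝ :=
    fun S => if S.card ≤ t then (2*p) ^ (m + S.card) else 0 with hB_def
  have hp2 : (0:ℝ) ≤ 2*p := by positivity
  have hB0 : ∀ S, 0 ≤ B S := by
    intro S
    simp only [hB_def]
    split
    · positivity
    · exact le_rfl
  have htermb : ∀ f ∈ PiS, |∫ ω, T f ω ∂ μ n| ≤ B (E.filter (fun e => 0 < mult f e)) := by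
    intro f hf
    rw [hTval f hf]
    simp only [hB_def]
    by_cases hcard : (E.filter (fun e => 0 < mult f e)).card ≤ t
    · rw [if_pos hcard, abs_mul, pow_add]
      exact mul_le_mul (hcprod f hf) (hIbound f hf) (abs_nonneg _) (by positivity)
    · rw [if_neg hcard, hIzero f hf (by omega), mul_zero, abs_zero]
  have hsupp_mem : ∀ f ∈ PiS, E.filter (fun e => 0 < mult f e) ∈ E.powerset :=
    fun f _ => Finset.mem_powerset.mpr (Finset.filter_subset _ _)
  have hfiber : ∑ f ∈ PiS, B (E.filter (fun e => 0 < mult f e))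
      = ∑ S ∈ E.powerset, ∑ f ∈ PiS.filter
          (fun f => E.filter (fun e => 0 < mult f e) = S),
          B (E.filter (fun e => 0 < mult f e)) :=
    (Finset.sum_fiberwise_of_maps_to hsupp_mem _).symm
  have hinner : ∀ S ∈ E.powerset,
      (∑ f ∈ PiS.filter (fun f => E.filter (fun e => 0 < mult f e) = S),
        B (E.filter (fun e => 0 < mult f e)))
      ≤ ((S.card : ℝ)) ^ m * B S := by
    intro S _
    have h1 : ∀ f ∈ PiS.filter (fun f => E.filter (fun e => 0 < mult f e) = S),
        B (E.filter (fun e => 0 < mult f e)) = B S := by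
      intro f hf
      rw [(Finset.mem_filter.mp hf).2]
    rw [Finset.sum_congr rfl h1, Finset.sum_const, nsmul_eq_mul]
    refine mul_le_mul_of_nonneg_right ?_ (hB0 S)
    have hsub : PiS.filter (fun f => E.filter (fun e => 0 < mult f e) = S)
        ⊆ (Finset.range m).pi (fun _ => S) := by
      intro f hf
      rw [Finset.mem_filter] at hf
      rw [Finset.mem_pi]
      intro a ha
      rw [← hf.2, Finset.mem_filter]
      refine ⟨Finset.mem_pi.mp hf.1 a ha, ?_⟩
      simp only [hmult_def]
      rw [Finset.card_pos]
      exact ⟨⟨a, ha⟩, Finset.mem_filter.mpr ⟨Finset.mem_attach _ _, rfl⟩⟩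
    calc ((PiS.filter (fun f => E.filter (fun e => 0 < mult f e) = S)).card : ℝ)
        ≤ (((Finset.range m).pi (fun _ => S)).card : ℝ) := by
          exact_mod_cast Finset.card_le_card hsub
      _ = ((S.card : ℝ)) ^ m := by
          rw [Finset.card_pi, Finset.prod_const, Finset.card_range]
          push_cast
          ring
  set K : ℝ := (t:ℝ)^m * (2*p)^m * ((n:ℝ)^2*(2*p))^t with hK_def
  have hK0 : 0 ≤ K := by rw [hK_def]; positivity
  have hh_def : ∀ S : Finset {q : ℕ × ℕ // q.1 < q.2},
      ((S.card : ℝ))^m * B S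
        = (fun r : ℕ => ((r:ℝ))^m * if r ≤ t then (2*p)^(m+r) else 0) S.card := by
    intro S
    simp only [hB_def]
  have hEcard : (E.card : ℝ) ≤ (n:ℝ)^2 := by
    have h1 : E.card ≤ n * n := by
      rw [hE_def]
      calc ((s ×ˢ s).subtype (fun q : ℕ × ℕ => q.1 < q.2)).card
          = ((s ×ˢ s).filter (fun q => q.1 < q.2)).card := Finset.card_subtype _ _
        _ ≤ (s ×ˢ s).card := Finset.card_filter_le _ _
        _ = s.card * s.card := Finset.card_product _ _
        _ ≤ n * n := by
            have h2 : s.card ≤ n := by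
              rw [hs_def]
              exact le_trans (Finset.card_erase_le) (le_of_eq (Finset.card_range n))
            exact Nat.mul_le_mul h2 h2
    calc (E.card : ℝ) ≤ ((n*n : ℕ) : ℝ) := by exact_mod_cast h1
      _ = (n:ℝ)^2 := by push_cast; ring
  have hbase : (1:ℝ) ≤ (n:ℝ)^2*(2*p) := by
    have hn0 : (0:ℝ) < (n:ℝ) := lt_of_lt_of_le one_pos hn1
    have h2 : (n:ℝ)^(α:ℝ) ≤ (n:ℝ)^(((2:ℕ)):ℝ) :=
      Real.rpow_le_rpow_of_exponent_le hn1 (by push_cast; nlinarith [hmodel.alpha_mem.2.le])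
    rw [Real.rpow_natCast] at h2
    have h3 : (n:ℝ)^(α:ℝ) * p = 1 := by
      rw [hp_def]
      show (n:ℝ)^(α:ℝ) * (n:ℝ)^(-α) = 1
      rw [← Real.rpow_add hn0]
      simp
    have h4 : (n:ℝ)^(α:ℝ) * p ≤ (n:ℝ)^2 * p := mul_le_mul_of_nonneg_right h2 hp0.le
    have h5 : (1:ℝ) ≤ (n:ℝ)^2 * p := by rw [← h3]; exact h4
    nlinarith [h5, hp0, sq_nonneg (n:ℝ)]
  have hKr : ∀ r ∈ Finset.range (E.card + 1),
      (E.card.choose r : ℝ) * (((r:ℝ))^m * if r ≤ t then (2*p)^(m+r) else 0)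
        ≤ (if r ≤ t then K else 0) := by
    intro r _
    by_cases hrt : r ≤ t
    · rw [if_pos hrt, if_pos hrt, hK_def]
      have h1 : (E.card.choose r : ℝ) ≤ ((n:ℝ)^2)^r := by
        calc (E.card.choose r : ℝ) ≤ ((E.card ^ r : ℕ) : ℝ) := by
              exact_mod_cast Nat.choose_le_pow _ _
          _ = ((E.card : ℝ))^r := by push_cast; ring
          _ ≤ ((n:ℝ)^2)^r := pow_le_pow_left₀ (by positivity) hEcard r
      have h2 : ((r:ℝ))^m ≤ ((t:ℝ))^m := pow_le_pow_left₀ (by positivity) (by exact_mod_cast hrt) m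
      calc (E.card.choose r : ℝ) * (((r:ℝ))^m * (2*p)^(m+r))
          ≤ ((n:ℝ)^2)^r * (((t:ℝ))^m * (2*p)^(m+r)) := by
            refine mul_le_mul h1 (mul_le_mul_of_nonneg_right h2 (by positivity))
              (by positivity) (by positivity)
        _ = (t:ℝ)^m * (2*p)^m * (((n:ℝ)^2*(2*p))^r) := by rw [mul_pow, pow_add]; ring
        _ ≤ (t:ℝ)^m * (2*p)^m * (((n:ℝ)^2*(2*p))^t) := by
            refine mul_le_mul_of_nonneg_left (pow_le_pow_right₀ hbase hrt) (by positivity)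
    · rw [if_neg hrt, if_neg hrt, mul_zero, mul_zero]
  have hfilter_card : ((((Finset.range (E.card+1)).filter (fun r => r ≤ t)).card : ℕ) : ℝ)
      ≤ (t:ℝ)+1 := by
    have h1 : (Finset.range (E.card+1)).filter (fun r => r ≤ t) ⊆ Finset.range (t+1) := by
      intro r hr
      rw [Finset.mem_filter] at hr
      rw [Finset.mem_range]
      omega
    calc ((((Finset.range (E.card+1)).filter (fun r => r ≤ t)).card : ℕ) : ℝ)
        ≤ (((Finset.range (t+1)).card : ℕ) : ℝ) := by
          exact_mod_cast Finset.card_le_card h1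
      _ = (t:ℝ)+1 := by rw [Finset.card_range]; push_cast; ring
  have hSA : (fun ω => (∑ j ∈ s, ∑ k ∈ s.erase j,
      edgeP α w n i j * Abar α w A n j k ω) ^ m)
      = fun ω => (∑ e ∈ E, c e.1 * Y e ω) ^ m := by
    funext ω
    congr 1
    rw [hs_def, hE_def]
    exact aux_stepA hmodel n i ω
  calc ∫ ω, (∑ j ∈ s, ∑ k ∈ s.erase j, edgeP α w n i j * Abar α w A n j k ω) ^ m ∂ μ n
      = ∑ f ∈ PiS, ∫ ω, T f ω ∂ μ n := by rw [hSA]; exact hswap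
    _ ≤ ∑ f ∈ PiS, |∫ ω, T f ω ∂ μ n| := Finset.sum_le_sum fun f _ => le_abs_self _
    _ ≤ ∑ f ∈ PiS, B (E.filter (fun e => 0 < mult f e)) := Finset.sum_le_sum htermb
    _ = ∑ S ∈ E.powerset, ∑ f ∈ PiS.filter
          (fun f => E.filter (fun e => 0 < mult f e) = S),
          B (E.filter (fun e => 0 < mult f e)) := hfiber
    _ ≤ ∑ S ∈ E.powerset, ((S.card : ℝ)) ^ m * B S := Finset.sum_le_sum hinner
    _ = ∑ S ∈ E.powerset,
          (fun r : ℕ => ((r:ℝ))^m * if r ≤ t then (2*p)^(m+r) else 0) S.card :=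
        Finset.sum_congr rfl (fun S _ => hh_def S)
    _ = ∑ r ∈ Finset.range (E.card+1), E.card.choose r •
          ((fun r : ℕ => ((r:ℝ))^m * if r ≤ t then (2*p)^(m+r) else 0) r) :=
        Finset.sum_powerset_apply_card (x := E)
          (fun r : ℕ => ((r:ℝ))^m * if r ≤ t then (2*p)^(m+r) else 0)
    _ = ∑ r ∈ Finset.range (E.card+1),
          (E.card.choose r : ℝ) * (((r:ℝ))^m * if r ≤ t then (2*p)^(m+r) else 0) := by
        refine Finset.sum_congr rfl fun r _ => ?_
        rw [nsmul_eq_mul]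
    _ ≤ ∑ r ∈ Finset.range (E.card+1), (if r ≤ t then K else 0) :=
        Finset.sum_le_sum hKr
    _ = ((((Finset.range (E.card+1)).filter (fun r => r ≤ t)).card : ℕ) : ℝ) * K := by
        rw [← Finset.sum_filter, Finset.sum_const, nsmul_eq_mul]
    _ ≤ ((t:ℝ)+1) * K := mul_le_mul_of_nonneg_right hfilter_card hK0
    _ = ((t : ℝ) + 1) * (t : ℝ) ^ m * 2 ^ (3 * t) * ((n:ℝ) * p) ^ m * p ^ t := by
        rw [hK_def, hmdef]
        ring
end
end

section
/- Let G_n(α,β,W) be the heterogeneous Erdős–Rényi random graph, Ā_{ij} = A_{ij} − p_n w_{ij}, and ν_i = Σ_{j,k} p_n² w_{ij} w_{jk}. Then E[((1/n) Σ_{i≠j≠k≠t} A_{ij}A_{jk}A_{ki} Ā_{ij} Ā_{jt} / ν_i²)²] = O(1/(n²(np_n)²)), where the sum is over quadruples of pairwise distinct indices i,j,k,t ∈ [n]. -/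
open MeasureTheory ProbabilityTheory Finset Filter

noncomputable section

/-- The statistic `(1/n) Σ_{i≠j≠k≠t} A_{ij}A_{jk}A_{ki} Ā_{ij} Ā_{jt} / ν_i²`. -/
def stat11 {Ω : ℕ → Type} (α : ℝ) (w : ℕ → ℕ → ℕ → ℝ) (A : ∀ n, ℕ → ℕ → Ω n → ℝ)
    (n : ℕ) (ω : Ω n) : ℝ :=
  ((n : ℝ))⁻¹ * ∑ i ∈ Finset.range n, ∑ j ∈ (Finset.range n).erase i,
    ∑ k ∈ ((Finset.range n).erase i).erase j,
      ∑ t ∈ (((Finset.range n).erase i).erase j).erase k,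
        A n i j ω * A n j k ω * A n k i ω * Abar α w A n i j ω * Abar α w A n j t ω /
          (nu α w n i) ^ 2

abbrev EI := {q : ℕ × ℕ // q.1 < q.2}

def edg (a b : ℕ) : EI :=
  if h : a < b then ⟨(a, b), h⟩ else if h' : b < a then ⟨(b, a), h'⟩ else ⟨(0, 1), by norm_num⟩

lemma edg_cases {a b : ℕ} (hab : a ≠ b) :
    ((edg a b).val.1 = a ∧ (edg a b).val.2 = b) ∨
    ((edg a b).val.1 = b ∧ (edg a b).val.2 = a) := by
  unfold edg
  rcases lt_or_gt_of_ne hab with h | h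
  · simp [h]
  · simp [h, Nat.lt_asymm h]

lemma edg_eq_iff {a b c d : ℕ} (hab : a ≠ b) (hcd : c ≠ d) :
    edg a b = edg c d ↔ (a = c ∧ b = d) ∨ (a = d ∧ b = c) := by
  unfold edg
  rcases lt_or_gt_of_ne hab with h | h <;> rcases lt_or_gt_of_ne hcd with h' | h' <;>
    simp [h, h', Nat.lt_asymm, Subtype.ext_iff, Prod.ext_iff] <;> omega

section Model

variable {Ω : ℕ → Type} [∀ n, MeasurableSpace (Ω n)] {α β : ℝ}
  {μ : ∀ n, Measure (Ω n)} {w : ℕ → ℕ → ℕ → ℝ} {A : ∀ n, ℕ → ℕ → Ω n → ℝ}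

/-- The edge variable family. -/
def XE (A : ∀ n, ℕ → ℕ → Ω n → ℝ) (n : ℕ) (e : EI) : Ω n → ℝ := fun ω => A n e.val.1 e.val.2 ω

lemma XE_edg (hm : IsHeterER α β μ w A) (n : ℕ) {a b : ℕ} (hab : a ≠ b) (ω : Ω n) :
    XE A n (edg a b) ω = A n a b ω := by
  rcases edg_cases hab with ⟨h1, h2⟩ | ⟨h1, h2⟩ <;> rw [XE, h1, h2]
  exact hm.A_symm n b a ω

lemma XE_meas (hm : IsHeterER α β μ w A) (n : ℕ) (e : EI) : Measurable (XE A n e) :=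
  hm.A_meas n e.val.1 e.val.2

lemma XE_vals (hm : IsHeterER α β μ w A) (n : ℕ) (e : EI) (ω : Ω n) :
    XE A n e ω = 0 ∨ XE A n e ω = 1 := hm.A_vals n e.val.1 e.val.2 ω

lemma XE_indep (hm : IsHeterER α β μ w A) (n : ℕ) :
    iIndepFun (XE A n) (μ n) := hm.A_indep n

/-- Integrability of a composition with a measurable function. -/
lemma integrable_comp_XE (hm : IsHeterER α β μ w A) (n : ℕ) (e : EI) (ψ : ℝ → ℝ)
    (hψ : Measurable ψ) : Integrable (fun ω => ψ (XE A n e ω)) (μ n) := by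
  have := hm.prob n
  refine (integrable_const (|ψ 0| + |ψ 1|)).mono'
    ((hψ.comp (XE_meas hm n e)).aestronglyMeasurable) (ae_of_all _ fun ω => ?_)
  rcases XE_vals hm n e ω with h | h <;> rw [h]
  · calc ‖ψ 0‖ = |ψ 0| := rfl
      _ ≤ |ψ 0| + |ψ 1| := le_add_of_nonneg_right (abs_nonneg _)
  · calc ‖ψ 1‖ = |ψ 1| := rfl
      _ ≤ |ψ 0| + |ψ 1| := le_add_of_nonneg_left (abs_nonneg _)

lemma integrable_prod_XE (hm : IsHeterER α β μ w A) (n : ℕ) (ψ : EI → ℝ → ℝ)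
    (hψ : ∀ e, Measurable (ψ e)) (t : Finset EI) :
    Integrable (∏ e ∈ t, fun ω => ψ e (XE A n e ω)) (μ n) := by
  classical
  have := hm.prob n
  have hmeas : ∀ e : EI, Measurable (fun ω => ψ e (XE A n e ω)) :=
    fun e => (hψ e).comp (XE_meas hm n e)
  induction t using Finset.induction_on with
  | empty =>
      simp only [Finset.prod_empty]
      exact integrable_const 1
  | insert b t hb ihb =>
    have hind : IndepFun (∏ e ∈ t, fun ω => ψ e (XE A n e ω))
        (fun ω => ψ b (XE A n b ω)) (μ n) :=
      (((XE_indep hm n).comp (fun e => ψ e) hψ)).indepFun_finsetProd_of_notMem hmeas hb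
    rw [Finset.prod_insert hb]
    have : Integrable ((∏ e ∈ t, fun ω => ψ e (XE A n e ω)) *
        fun ω => ψ b (XE A n b ω)) (μ n) :=
      hind.integrable_mul ihb (integrable_comp_XE hm n b (ψ b) (hψ b))
    simpa [mul_comm] using this

/-- Master independence lemma: integral of a product over distinct edges factorizes. -/
lemma integral_prod_XE (hm : IsHeterER α β μ w A) (n : ℕ) (ψ : EI → ℝ → ℝ)
    (hψ : ∀ e, Measurable (ψ e)) (s : Finset EI) :
    ∫ ω, ∏ e ∈ s, ψ e (XE A n e ω) ∂μ n = ∏ e ∈ s, ∫ ω, ψ e (XE A n e ω) ∂μ n := by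
  classical
  have := hm.prob n
  have hmeas : ∀ e : EI, Measurable (fun ω => ψ e (XE A n e ω)) :=
    fun e => (hψ e).comp (XE_meas hm n e)
  induction s using Finset.induction_on with
  | empty => simp [(hm.prob n).measure_univ]
  | insert a s ha ih =>
    have hind : IndepFun (∏ e ∈ s, fun ω => ψ e (XE A n e ω))
        (fun ω => ψ a (XE A n a ω)) (μ n) :=
      (((XE_indep hm n).comp (fun e => ψ e) hψ)).indepFun_finsetProd_of_notMem hmeas ha
    have key := hind.integral_mul_eq_mul_integral (integrable_prod_XE hm n ψ hψ s).aestronglyMeasurable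
      (integrable_comp_XE hm n a (ψ a) (hψ a)).aestronglyMeasurable
    rw [show ((∏ e ∈ s, fun ω => ψ e (XE A n e ω)) * fun ω => ψ a (XE A n a ω)) =
        fun ω => (∏ e ∈ s, ψ e (XE A n e ω)) * ψ a (XE A n a ω) from
          funext fun ω => by simp [Finset.prod_apply],
      show (∏ e ∈ s, fun ω => ψ e (XE A n e ω)) = fun ω => ∏ e ∈ s, ψ e (XE A n e ω) from
          funext fun ω => by simp [Finset.prod_apply]] at key
    rw [Finset.prod_insert ha]
    rw [show (∫ ω, ∏ e ∈ insert a s, ψ e (XE A n e ω) ∂μ n) =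
        ∫ ω, (∏ e ∈ s, ψ e (XE A n e ω)) * ψ a (XE A n a ω) ∂μ n from by
          congr 1; funext ω; rw [Finset.prod_insert ha, mul_comm]]
    rw [key, ih]
    ring

end Model
section Model2

variable {Ω : ℕ → Type} [∀ n, MeasurableSpace (Ω n)] {α β : ℝ}
  {μ : ∀ n, Measure (Ω n)} {w : ℕ → ℕ → ℕ → ℝ} {A : ∀ n, ℕ → ℕ → Ω n → ℝ}

lemma pn_pos {n : ℕ} (hn : 1 ≤ n) : 0 < pn α n :=
  Real.rpow_pos_of_pos (by exact_mod_cast hn) _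

lemma pn_nonneg (n : ℕ) : 0 ≤ pn α n := Real.rpow_nonneg (Nat.cast_nonneg n) _

lemma pn_le_one (hα : 0 < α) {n : ℕ} (hn : 1 ≤ n) : pn α n ≤ 1 :=
  Real.rpow_le_one_of_one_le_of_nonpos (by exact_mod_cast hn) (by linarith)

lemma one_le_npn (hα : α < 1) {n : ℕ} (hn : 1 ≤ n) : 1 ≤ (n : ℝ) * pn α n := by
  have hn' : (1 : ℝ) ≤ (n : ℝ) := by exact_mod_cast hn
  have h0 : (0 : ℝ) < (n : ℝ) := by linarith
  have : (n : ℝ) * pn α n = (n : ℝ) ^ ((1 : ℝ) - α) := by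
    rw [pn, show ((1:ℝ) - α) = 1 + (-α) by ring, Real.rpow_add h0, Real.rpow_one]
  rw [this]
  exact Real.one_le_rpow hn' (by linarith)

lemma w_nonneg (hm : IsHeterER α β μ w A) {n i j : ℕ} (hi : i ∈ Finset.range n)
    (hj : j ∈ Finset.range n) : 0 ≤ w n i j := by
  rcases eq_or_ne i j with rfl | hij
  · rw [hm.w_diag]
  · exact le_trans (le_of_lt hm.beta_mem.1) (hm.w_mem n i hi j hj hij).1

lemma edgeP_nonneg (hm : IsHeterER α β μ w A) {n i j : ℕ} (hi : i ∈ Finset.range n)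
    (hj : j ∈ Finset.range n) : 0 ≤ edgeP α w n i j :=
  mul_nonneg (pn_nonneg n) (w_nonneg hm hi hj)

lemma edgeP_le_pn (hm : IsHeterER α β μ w A) {n i j : ℕ} (hi : i ∈ Finset.range n)
    (hj : j ∈ Finset.range n) : edgeP α w n i j ≤ pn α n := by
  rcases eq_or_ne i j with rfl | hij
  · rw [edgeP, hm.w_diag, mul_zero]; exact pn_nonneg n
  · calc edgeP α w n i j ≤ pn α n * 1 :=
        mul_le_mul_of_nonneg_left (hm.w_mem n i hi j hj hij).2 (pn_nonneg n)
      _ = pn α n := mul_one _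

lemma edgeP_le_one (hm : IsHeterER α β μ w A) {n i j : ℕ} (hi : i ∈ Finset.range n)
    (hj : j ∈ Finset.range n) : edgeP α w n i j ≤ 1 := by
  have hn : 1 ≤ n := Nat.one_le_iff_ne_zero.mpr (by rintro rfl; exact absurd hi (by simp))
  exact le_trans (edgeP_le_pn hm hi hj) (pn_le_one hm.alpha_mem.1 hn)

lemma abs_Abar_le_one (hm : IsHeterER α β μ w A) {n i j : ℕ} (hi : i ∈ Finset.range n)
    (hj : j ∈ Finset.range n) (ω : Ω n) : |A n i j ω - edgeP α w n i j| ≤ 1 := by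
  have h0 := edgeP_nonneg hm hi hj
  have h1 := edgeP_le_one hm hi hj
  rcases hm.A_vals n i j ω with h | h <;> rw [h, abs_le] <;> constructor <;> linarith

lemma integral_A (hm : IsHeterER α β μ w A) {n i j : ℕ} (hi : i ∈ Finset.range n)
    (hj : j ∈ Finset.range n) (hij : i ≠ j) :
    ∫ ω, A n i j ω ∂μ n = edgeP α w n i j := by
  have hms : MeasurableSet {ω | A n i j ω = 1} :=
    (hm.A_meas n i j) (measurableSet_singleton 1)
  have heq : (fun ω => A n i j ω) = Set.indicator {ω | A n i j ω = 1} (fun _ => (1 : ℝ)) := by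
    funext ω
    rcases hm.A_vals n i j ω with h | h <;> rw [h]
    · rw [Set.indicator_of_notMem]; simp [h]
    · rw [Set.indicator_of_mem]; exact h
  rw [heq, integral_indicator_const _ hms, measureReal_def, hm.A_prob n i hi j hj hij, smul_eq_mul, mul_one,
    ENNReal.toReal_ofReal (edgeP_nonneg hm hi hj)]

lemma integral_XE_valid (hm : IsHeterER α β μ w A) {n : ℕ} {e : EI}
    (h1 : e.val.1 ∈ Finset.range n) (h2 : e.val.2 ∈ Finset.range n) :
    ∫ ω, XE A n e ω ∂μ n = edgeP α w n e.val.1 e.val.2 :=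
  integral_A hm h1 h2 (Nat.ne_of_lt e.prop)

lemma nu_ge (hm : IsHeterER α β μ w A) {n i : ℕ} (hi : i ∈ Finset.range n) :
    ((n : ℝ) - 1) ^ 2 * (pn α n * β) ^ 2 ≤ nu α w n i := by
  have hn1 : 1 ≤ n := Nat.one_le_iff_ne_zero.mpr (by rintro rfl; exact absurd hi (by simp))
  have hterm : ∀ j ∈ Finset.range n, ∀ k ∈ Finset.range n,
      0 ≤ edgeP α w n i j * edgeP α w n j k := fun j hj k hk =>
    mul_nonneg (edgeP_nonneg hm hi hj) (edgeP_nonneg hm hj hk)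
  have hlow : ∀ j ∈ (Finset.range n).erase i, ∀ k ∈ (Finset.range n).erase j,
      pn α n * β * (pn α n * β) ≤ edgeP α w n i j * edgeP α w n j k := by
    intro j hj k hk
    have hj' := Finset.mem_of_mem_erase hj
    have hk' := Finset.mem_of_mem_erase hk
    have hij : i ≠ j := (Finset.ne_of_mem_erase hj).symm
    have hjk : j ≠ k := (Finset.ne_of_mem_erase hk).symm
    have hb := hm.beta_mem.1
    have h1 : pn α n * β ≤ edgeP α w n i j :=
      mul_le_mul_of_nonneg_left (hm.w_mem n i hi j hj' hij).1 (pn_nonneg n)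
    have h2 : pn α n * β ≤ edgeP α w n j k :=
      mul_le_mul_of_nonneg_left (hm.w_mem n j hj' k hk' hjk).1 (pn_nonneg n)
    have h3 : (0:ℝ) ≤ pn α n * β := mul_nonneg (pn_nonneg (α := α) n) (le_of_lt hb)
    exact mul_le_mul h1 h2 h3 (edgeP_nonneg hm hi hj')
  have step1 : ∑ j ∈ (Finset.range n).erase i, ∑ k ∈ (Finset.range n).erase j,
      (pn α n * β * (pn α n * β)) ≤ nu α w n i := by
    rw [nu]
    refine le_trans (Finset.sum_le_sum fun j hj => Finset.sum_le_sum (hlow j hj)) ?_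
    refine le_trans (Finset.sum_le_sum fun j hj =>
      Finset.sum_le_sum_of_subset_of_nonneg (Finset.erase_subset _ _)
        (fun k hk _ => hterm j (Finset.mem_of_mem_erase hj) k hk)) ?_
    exact Finset.sum_le_sum_of_subset_of_nonneg (Finset.erase_subset _ _)
      (fun j hj _ => Finset.sum_nonneg (hterm j hj))
  have hc : ∑ j ∈ (Finset.range n).erase i, ∑ k ∈ (Finset.range n).erase j,
      (pn α n * β * (pn α n * β)) = ((n : ℝ) - 1) ^ 2 * (pn α n * β) ^ 2 := by
    rw [Finset.sum_congr rfl (fun j hj => by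
      rw [Finset.sum_const, Finset.card_erase_of_mem (Finset.mem_of_mem_erase hj),
        Finset.card_range, nsmul_eq_mul])]
    rw [Finset.sum_const, Finset.card_erase_of_mem hi, Finset.card_range, nsmul_eq_mul]
    push_cast [Nat.cast_sub hn1]
    ring
  rw [← hc]
  exact step1

end Model2
section Model3

variable {Ω : ℕ → Type} [∀ n, MeasurableSpace (Ω n)] {α β : ℝ}
  {μ : ∀ n, Measure (Ω n)} {w : ℕ → ℕ → ℕ → ℝ} {A : ∀ n, ℕ → ℕ → Ω n → ℝ}

lemma edgeP_symm (hm : IsHeterER α β μ w A) (n a b : ℕ) :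
    edgeP α w n a b = edgeP α w n b a := by rw [edgeP, edgeP, hm.w_symm]

/-- The quadruple summand numerator. -/
def Tq (α : ℝ) (w : ℕ → ℕ → ℕ → ℝ) (A : ∀ n, ℕ → ℕ → Ω n → ℝ) (n i j k t : ℕ)
    (ω : Ω n) : ℝ :=
  A n i j ω * A n j k ω * A n k i ω * (A n i j ω - edgeP α w n i j) *
    (A n j t ω - edgeP α w n j t)

/-- General vanishing lemma: centered edge times a product over other edges integrates to 0. -/
lemma vanish_gen (hm : IsHeterER α β μ w A) {n : ℕ} {m : ℕ} (g : Fin m → EI)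
    (φ : Fin m → ℝ → ℝ) (hφ : ∀ l, Measurable (φ l)) (e0 : EI)
    (h1 : e0.val.1 ∈ Finset.range n) (h2 : e0.val.2 ∈ Finset.range n)
    (hg : ∀ l, g l ≠ e0) :
    ∫ ω, (XE A n e0 ω - edgeP α w n e0.val.1 e0.val.2) *
      ∏ l, φ l (XE A n (g l) ω) ∂μ n = 0 := by
  classical
  have hprob := hm.prob n
  have he0nm : e0 ∉ Finset.image g Finset.univ := by
    simp only [Finset.mem_image, Finset.mem_univ, true_and, not_exists]
    exact hg
  set Ψ : EI → ℝ → ℝ := fun e => if e = e0 then (fun v => v - edgeP α w n e0.val.1 e0.val.2)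
    else (fun v => ∏ l ∈ Finset.univ.filter (fun l => g l = e), φ l v) with hΨdef
  have hΨm : ∀ e, Measurable (Ψ e) := by
    intro e
    simp only [hΨdef]
    split_ifs
    · exact measurable_id.sub measurable_const
    · exact Finset.measurable_prod _ (fun l _ => hφ l)
  have hpt2 : ∀ ω, ∏ e ∈ insert e0 (Finset.image g Finset.univ), Ψ e (XE A n e ω) =
      (XE A n e0 ω - edgeP α w n e0.val.1 e0.val.2) * ∏ l, φ l (XE A n (g l) ω) := by
    intro ω
    rw [Finset.prod_insert he0nm]
    congr 1
    · simp [hΨdef]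
    · rw [Finset.prod_congr rfl (fun e he => ?_)]
      · exact Finset.prod_fiberwise_of_maps_to (fun l _ => Finset.mem_image_of_mem g
          (Finset.mem_univ l)) (fun l => φ l (XE A n (g l) ω))
      · have hee0 : e ≠ e0 := fun hcon => he0nm (hcon ▸ he)
        rw [hΨdef]
        simp only [if_neg hee0]
        exact Finset.prod_congr rfl (fun l hl => by
          rw [Finset.mem_filter] at hl
          rw [hl.2])
  have hint : ∫ ω, (XE A n e0 ω - edgeP α w n e0.val.1 e0.val.2) *
      ∏ l, φ l (XE A n (g l) ω) ∂μ n =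
      ∏ e ∈ insert e0 (Finset.image g Finset.univ), ∫ ω, Ψ e (XE A n e ω) ∂μ n := by
    rw [← integral_prod_XE hm n Ψ hΨm]
    congr 1
    funext ω
    rw [hpt2 ω]
  rw [hint, Finset.prod_insert he0nm]
  have hzero : ∫ ω, Ψ e0 (XE A n e0 ω) ∂μ n = 0 := by
    have heq : (fun ω => Ψ e0 (XE A n e0 ω)) =
        fun ω => XE A n e0 ω - edgeP α w n e0.val.1 e0.val.2 := by
      funext ω; rw [hΨdef]; simp
    have hX : Integrable (fun ω => XE A n e0 ω) (μ n) :=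
      integrable_comp_XE hm n e0 id measurable_id
    rw [heq, integral_sub hX (integrable_const _), integral_XE_valid hm h1 h2, integral_const]
    simp
  rw [hzero, zero_mul]

end Model3
section Model4

variable {Ω : ℕ → Type} [∀ n, MeasurableSpace (Ω n)] {α β : ℝ}
  {μ : ∀ n, Measure (Ω n)} {w : ℕ → ℕ → ℕ → ℝ} {A : ∀ n, ℕ → ℕ → Ω n → ℝ}

set_option maxHeartbeats 1000000 in
lemma vanish (hm : IsHeterER α β μ w A) {n i j k t i' j' k' t' : ℕ}
    (hi : i ∈ Finset.range n) (hj : j ∈ Finset.range n) (hk : k ∈ Finset.range n)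
    (ht : t ∈ Finset.range n) (hi' : i' ∈ Finset.range n) (hj' : j' ∈ Finset.range n)
    (hk' : k' ∈ Finset.range n) (ht' : t' ∈ Finset.range n)
    (hij : i ≠ j) (hik : i ≠ k) (hit : i ≠ t) (hjk : j ≠ k) (hjt : j ≠ t) (hkt : k ≠ t)
    (hij' : i' ≠ j') (hik' : i' ≠ k') (hit' : i' ≠ t') (hjk' : j' ≠ k') (hjt' : j' ≠ t')
    (hkt' : k' ≠ t')
    (hns : (j' ≠ i ∧ j' ≠ j ∧ j' ≠ k ∧ j' ≠ t) ∨ (t' ≠ i ∧ t' ≠ j ∧ t' ≠ k ∧ t' ≠ t)) :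
    ∫ ω, Tq α w A n i j k t ω * Tq α w A n i' j' k' t' ω ∂μ n = 0 := by
  classical
  have he0v1 : (edg j' t').val.1 ∈ Finset.range n := by
    rcases edg_cases hjt' with ⟨h1, _⟩ | ⟨h1, _⟩ <;> rw [h1] <;> assumption
  have he0v2 : (edg j' t').val.2 ∈ Finset.range n := by
    rcases edg_cases hjt' with ⟨_, h2⟩ | ⟨_, h2⟩ <;> rw [h2] <;> assumption
  have hc : edgeP α w n (edg j' t').val.1 (edg j' t').val.2 = edgeP α w n j' t' := by
    rcases edg_cases hjt' with ⟨h1, h2⟩ | ⟨h1, h2⟩ <;> rw [h1, h2]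
    exact (edgeP_symm hm n j' t').symm
  have key := vanish_gen hm
    (![edg i j, edg j k, edg k i, edg j t, edg i' j', edg j' k', edg k' i'])
    (fun l v => v ^ (![1, 1, 1, 0, 1, 1, 1] l : ℕ) *
      (v - ![edgeP α w n i j, 0, 0, edgeP α w n j t, edgeP α w n i' j', 0, 0] l) ^
        (![1, 0, 0, 1, 1, 0, 0] l : ℕ))
    (fun l => (measurable_id.pow_const _).mul
      ((measurable_id.sub measurable_const).pow_const _))
    (edg j' t') he0v1 he0v2
    (by
      have keyne : ∀ (a b : ℕ), a ≠ b → ¬(a = j' ∧ b = t') → ¬(a = t' ∧ b = j') →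
          edg a b ≠ edg j' t' := by
        intro a b hab h1 h2
        rw [Ne, edg_eq_iff hab hjt']
        tauto
      intro l
      fin_cases l
      · exact keyne _ _ hij (by rcases hns with h | h <;> omega)
          (by rcases hns with h | h <;> omega)
      · exact keyne _ _ hjk (by rcases hns with h | h <;> omega)
          (by rcases hns with h | h <;> omega)
      · exact keyne _ _ (Ne.symm hik) (by rcases hns with h | h <;> omega)
          (by rcases hns with h | h <;> omega)
      · exact keyne _ _ hjt (by rcases hns with h | h <;> omega)
          (by rcases hns with h | h <;> omega)
      · exact keyne _ _ hij' (by omega) (by omega)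
      · exact keyne _ _ hjk' (by omega) (by omega)
      · exact keyne _ _ (Ne.symm hik') (by omega) (by omega))
  rw [← key]
  congr 1
  funext ω
  rw [hc, Fin.prod_univ_seven]
  show Tq α w A n i j k t ω * Tq α w A n i' j' k' t' ω =
    (XE A n (edg j' t') ω - edgeP α w n j' t') *
    (XE A n (edg i j) ω ^ (1:ℕ) * (XE A n (edg i j) ω - edgeP α w n i j) ^ (1:ℕ) *
     (XE A n (edg j k) ω ^ (1:ℕ) * (XE A n (edg j k) ω - 0) ^ (0:ℕ)) *
     (XE A n (edg k i) ω ^ (1:ℕ) * (XE A n (edg k i) ω - 0) ^ (0:ℕ)) *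
     (XE A n (edg j t) ω ^ (0:ℕ) * (XE A n (edg j t) ω - edgeP α w n j t) ^ (1:ℕ)) *
     (XE A n (edg i' j') ω ^ (1:ℕ) * (XE A n (edg i' j') ω - edgeP α w n i' j') ^ (1:ℕ)) *
     (XE A n (edg j' k') ω ^ (1:ℕ) * (XE A n (edg j' k') ω - 0) ^ (0:ℕ)) *
     (XE A n (edg k' i') ω ^ (1:ℕ) * (XE A n (edg k' i') ω - 0) ^ (0:ℕ)))
  rw [XE_edg hm n hij, XE_edg hm n hjk, XE_edg hm n (Ne.symm hik), XE_edg hm n hjt,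
    XE_edg hm n hij', XE_edg hm n hjk', XE_edg hm n (Ne.symm hik'), XE_edg hm n hjt']
  rw [Tq, Tq]
  ring

end Model4
section Model5

variable {Ω : ℕ → Type} [∀ n, MeasurableSpace (Ω n)] {α β : ℝ}
  {μ : ∀ n, Measure (Ω n)} {w : ℕ → ℕ → ℕ → ℝ} {A : ∀ n, ℕ → ℕ → Ω n → ℝ}

lemma A_nonneg (hm : IsHeterER α β μ w A) (n i j : ℕ) (ω : Ω n) : 0 ≤ A n i j ω := by
  rcases hm.A_vals n i j ω with h | h <;> rw [h] <;> norm_num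

lemma A_le_one (hm : IsHeterER α β μ w A) (n i j : ℕ) (ω : Ω n) : A n i j ω ≤ 1 := by
  rcases hm.A_vals n i j ω with h | h <;> rw [h] <;> norm_num

lemma edg_val_mem {n a b : ℕ} (hab : a ≠ b) (ha : a ∈ Finset.range n)
    (hb : b ∈ Finset.range n) :
    (edg a b).val.1 ∈ Finset.range n ∧ (edg a b).val.2 ∈ Finset.range n := by
  rcases edg_cases hab with ⟨h1, h2⟩ | ⟨h1, h2⟩ <;> rw [h1, h2] <;> exact ⟨by assumption, by assumption⟩

/-- Key upper bound: the integral of a function dominated by a product of edge indicators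
(with one centered factor) over distinct edges. -/
lemma abs_integral_le_prodB (hm : IsHeterER α β μ w A) {n : ℕ} (s : Finset EI) (e0 : EI)
    (he0 : e0 ∈ s)
    (hval : ∀ e ∈ s, e.val.1 ∈ Finset.range n ∧ e.val.2 ∈ Finset.range n)
    (c0 : ℝ) (hc00 : 0 ≤ c0) (hc0p : c0 ≤ pn α n)
    (F : Ω n → ℝ) (hFint : Integrable F (μ n))
    (hFle : ∀ ω, |F ω| ≤ ∏ e ∈ s, (if e = e0 then |XE A n e ω - c0| else XE A n e ω)) :
    |∫ ω, F ω ∂μ n| ≤ 2 * pn α n ^ s.card := by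
  classical
  have hprob := hm.prob n
  set ψ : EI → ℝ → ℝ := fun e => if e = e0 then (fun v => |v - c0|) else (fun v => v) with hψdef
  have hψm : ∀ e, Measurable (ψ e) := by
    intro e
    simp only [hψdef]
    split_ifs
    · exact (measurable_id.sub measurable_const).abs
    · exact measurable_id
  have hψeq : ∀ ω, ∏ e ∈ s, (if e = e0 then |XE A n e ω - c0| else XE A n e ω) =
      ∏ e ∈ s, ψ e (XE A n e ω) := by
    intro ω
    refine Finset.prod_congr rfl (fun e _ => ?_)
    simp only [hψdef]
    split_ifs <;> rfl
  have hG : Integrable (fun ω => ∏ e ∈ s, ψ e (XE A n e ω)) (μ n) := by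
    have := integrable_prod_XE hm n ψ hψm s
    rwa [show (∏ e ∈ s, fun ω => ψ e (XE A n e ω)) = fun ω => ∏ e ∈ s, ψ e (XE A n e ω) from
      funext fun ω => by simp [Finset.prod_apply]] at this
  have step1 : |∫ ω, F ω ∂μ n| ≤ ∫ ω, ∏ e ∈ s, ψ e (XE A n e ω) ∂μ n := by
    calc |∫ ω, F ω ∂μ n| ≤ ∫ ω, |F ω| ∂μ n := by
          simpa [Real.norm_eq_abs] using norm_integral_le_integral_norm F (μ := μ n)
      _ ≤ ∫ ω, ∏ e ∈ s, ψ e (XE A n e ω) ∂μ n := by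
          refine integral_mono hFint.abs hG (fun ω => ?_)
          rw [← hψeq ω]
          exact hFle ω
  have step2 : ∫ ω, ∏ e ∈ s, ψ e (XE A n e ω) ∂μ n = ∏ e ∈ s, ∫ ω, ψ e (XE A n e ω) ∂μ n :=
    integral_prod_XE hm n ψ hψm s
  have step3 : ∏ e ∈ s, ∫ ω, ψ e (XE A n e ω) ∂μ n ≤
      ∏ e ∈ s, (if e = e0 then 2 * pn α n else pn α n) := by
    refine Finset.prod_le_prod (fun e _ => ?_) (fun e he => ?_)
    · refine integral_nonneg (fun ω => ?_)
      simp only [hψdef]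
      split_ifs
      · exact abs_nonneg _
      · exact A_nonneg hm n _ _ ω
    · rcases eq_or_ne e e0 with rfl | hne
      · simp only [hψdef, eq_self_iff_true, if_true]
        have hmono : ∫ ω, |XE A n e ω - c0| ∂μ n ≤ ∫ ω, XE A n e ω + c0 ∂μ n := by
          refine integral_mono (integrable_comp_XE hm n e (fun v => |v - c0|)
            ((measurable_id.sub measurable_const).abs))
            ((integrable_comp_XE hm n e id measurable_id).add (integrable_const _))
            (fun ω => ?_)
          have h0 : 0 ≤ XE A n e ω := A_nonneg hm n _ _ ω
          rw [abs_le]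
          exact ⟨by linarith, by linarith⟩
        have hX : Integrable (fun ω => XE A n e ω) (μ n) :=
          integrable_comp_XE hm n e id measurable_id
        have hsum : ∫ ω, XE A n e ω + c0 ∂μ n = edgeP α w n e.val.1 e.val.2 + c0 := by
          rw [integral_add hX (integrable_const _),
            integral_XE_valid hm (hval e he).1 (hval e he).2, integral_const]
          simp
        refine le_trans hmono ?_
        rw [hsum]
        have hle := edgeP_le_pn hm (hval e he).1 (hval e he).2
        linarith
      · simp only [hψdef, if_neg hne]
        have := integral_XE_valid hm (hval e he).1 (hval e he).2
        rw [show (fun ω => XE A n e ω) = XE A n e from rfl] at this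
        calc ∫ ω, XE A n e ω ∂μ n = edgeP α w n e.val.1 e.val.2 := this
          _ ≤ pn α n := edgeP_le_pn hm (hval e he).1 (hval e he).2
  have step4 : ∏ e ∈ s, (if e = e0 then 2 * pn α n else pn α n) = 2 * pn α n ^ s.card := by
    rw [← Finset.mul_prod_erase s _ he0, if_pos rfl]
    rw [Finset.prod_congr rfl (fun e he => if_neg (Finset.ne_of_mem_erase he))]
    rw [Finset.prod_const, Finset.card_erase_of_mem he0]
    have hpos : 0 < s.card := Finset.card_pos.mpr ⟨e0, he0⟩
    have hpow : pn α n ^ s.card = pn α n ^ (s.card - 1) * pn α n := by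
      rw [← pow_succ]
      congr 1
      omega
    rw [hpow]
    ring
  calc |∫ ω, F ω ∂μ n| ≤ ∏ e ∈ s, ∫ ω, ψ e (XE A n e ω) ∂μ n := step2 ▸ step1
    _ ≤ ∏ e ∈ s, (if e = e0 then 2 * pn α n else pn α n) := step3
    _ = 2 * pn α n ^ s.card := step4

end Model5
section Model6

variable {Ω : ℕ → Type} [∀ n, MeasurableSpace (Ω n)] {α β : ℝ}
  {μ : ∀ n, Measure (Ω n)} {w : ℕ → ℕ → ℕ → ℝ} {A : ∀ n, ℕ → ℕ → Ω n → ℝ}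

/-- Pointwise bound on a product of two quadruple terms. -/
lemma pointwise_pb {a1 a2 a3 a4 c1 c4 b1 b2 b3 b4 d1 d4 B1 B2 : ℝ}
    (ha1 : 0 ≤ a1) (ha2 : 0 ≤ a2) (ha3 : 0 ≤ a3)
    (hb1 : 0 ≤ b1) (hb2 : 0 ≤ b2) (hb3 : 0 ≤ b3) (hb3' : b3 ≤ 1)
    (hc1 : |a1 - c1| ≤ 1) (hd1 : |b1 - d1| ≤ 1) (hd4 : |b4 - d4| ≤ 1)
    (hB1 : b1 ≤ B1) (hB2 : b2 ≤ B2) (h0B1 : 0 ≤ B1) (h0B2 : 0 ≤ B2) :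
    |a1 * a2 * a3 * (a1 - c1) * (a4 - c4) * (b1 * b2 * b3 * (b1 - d1) * (b4 - d4))| ≤
      a1 * a2 * a3 * |a4 - c4| * B1 * B2 := by
  have key : |a1 * a2 * a3 * (a1 - c1) * (a4 - c4) * (b1 * b2 * b3 * (b1 - d1) * (b4 - d4))|
      = a1 * a2 * a3 * |a1 - c1| * |a4 - c4| *
        (b1 * b2 * b3 * |b1 - d1| * |b4 - d4|) := by
    rw [abs_mul, abs_mul, abs_mul, abs_mul, abs_mul, abs_mul, abs_mul, abs_mul, abs_mul,
      abs_of_nonneg ha1, abs_of_nonneg ha2, abs_of_nonneg ha3, abs_of_nonneg hb1,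
      abs_of_nonneg hb2, abs_of_nonneg hb3]
  rw [key]
  calc a1 * a2 * a3 * |a1 - c1| * |a4 - c4| * (b1 * b2 * b3 * |b1 - d1| * |b4 - d4|)
      ≤ a1 * a2 * a3 * 1 * |a4 - c4| * (B1 * B2 * 1 * 1 * 1) := by
        gcongr <;> first | exact abs_nonneg _ | assumption
    _ = a1 * a2 * a3 * |a4 - c4| * B1 * B2 := by ring

lemma Tq_meas (hm : IsHeterER α β μ w A) (n i j k t : ℕ) :
    Measurable (Tq α w A n i j k t) :=
  ((((hm.A_meas n i j).mul (hm.A_meas n j k)).mul (hm.A_meas n k i)).mul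
    ((hm.A_meas n i j).sub measurable_const)).mul ((hm.A_meas n j t).sub measurable_const)

lemma abs_Tq_le_one (hm : IsHeterER α β μ w A) {n i j k t : ℕ}
    (hi : i ∈ Finset.range n) (hj : j ∈ Finset.range n) (ht : t ∈ Finset.range n)
    (ω : Ω n) : |Tq α w A n i j k t ω| ≤ 1 := by
  rw [Tq, abs_mul, abs_mul, abs_mul, abs_mul]
  have h1 := A_nonneg hm n i j ω; have h1' := A_le_one hm n i j ω
  have h2 := A_nonneg hm n j k ω; have h2' := A_le_one hm n j k ω
  have h3 := A_nonneg hm n k i ω; have h3' := A_le_one hm n k i ω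
  have h4 := abs_Abar_le_one hm hi hj ω
  have h5 := abs_Abar_le_one hm hj ht ω
  rw [abs_of_nonneg h1, abs_of_nonneg h2, abs_of_nonneg h3]
  exact mul_le_one₀ (mul_le_one₀ (mul_le_one₀ (mul_le_one₀ h1' h2 h2') h3 h3')
    (abs_nonneg _) h4) (abs_nonneg _) h5

lemma integrable_TqTq (hm : IsHeterER α β μ w A) {n i j k t i' j' k' t' : ℕ}
    (hi : i ∈ Finset.range n) (hj : j ∈ Finset.range n) (ht : t ∈ Finset.range n)
    (hi' : i' ∈ Finset.range n) (hj' : j' ∈ Finset.range n) (ht' : t' ∈ Finset.range n) :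
    Integrable (fun ω => Tq α w A n i j k t ω * Tq α w A n i' j' k' t' ω) (μ n) := by
  have := hm.prob n
  refine (integrable_const (1 : ℝ)).mono'
    (((Tq_meas hm n i j k t).mul (Tq_meas hm n i' j' k' t')).aestronglyMeasurable)
    (ae_of_all _ fun ω => ?_)
  rw [Real.norm_eq_abs, abs_mul]
  exact mul_le_one₀ (abs_Tq_le_one hm hi hj ht ω) (abs_nonneg _)
    (abs_Tq_le_one hm hi' hj' ht' ω)

end Model6
section Model7

variable {Ω : ℕ → Type} [∀ n, MeasurableSpace (Ω n)] {α β : ℝ}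
  {μ : ∀ n, Measure (Ω n)} {w : ℕ → ℕ → ℕ → ℝ} {A : ∀ n, ℕ → ℕ → Ω n → ℝ}

set_option maxHeartbeats 2000000 in
lemma Tq_bound (hm : IsHeterER α β μ w A) {n i j k t i' j' k' t' : ℕ}
    (hi : i ∈ Finset.range n) (hj : j ∈ Finset.range n) (hk : k ∈ Finset.range n)
    (ht : t ∈ Finset.range n) (hi' : i' ∈ Finset.range n) (hj' : j' ∈ Finset.range n)
    (hk' : k' ∈ Finset.range n) (ht' : t' ∈ Finset.range n)
    (hij : i ≠ j) (hik : i ≠ k) (hit : i ≠ t) (hjk : j ≠ k) (hjt : j ≠ t) (hkt : k ≠ t)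
    (hij' : i' ≠ j') (hik' : i' ≠ k') (hit' : i' ≠ t') (hjk' : j' ≠ k') (hjt' : j' ≠ t')
    (hkt' : k' ≠ t') :
    |∫ ω, Tq α w A n i j k t ω * Tq α w A n i' j' k' t' ω ∂μ n| ≤
      2 * pn α n ^ 4 * (if i' = i ∨ i' = j ∨ i' = k ∨ i' = t then 1 else pn α n) *
        (if k' = i ∨ k' = j ∨ k' = k ∨ k' = t then 1 else pn α n) := by
  classical
  set e1 := edg i j with he1
  set e2 := edg j k with he2
  set e3 := edg k i with he3
  set e0 := edg j t with he0
  set f1 := edg i' j' with hf1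
  set f2 := edg j' k' with hf2
  set c0 := edgeP α w n j t with hc0
  -- pairwise distinctness of base edges
  have ne12 : e1 ≠ e2 := by rw [he1, he2, Ne, edg_eq_iff hij hjk]; omega
  have ne13 : e1 ≠ e3 := by rw [he1, he3, Ne, edg_eq_iff hij (Ne.symm hik)]; omega
  have ne10 : e1 ≠ e0 := by rw [he1, he0, Ne, edg_eq_iff hij hjt]; omega
  have ne23 : e2 ≠ e3 := by rw [he2, he3, Ne, edg_eq_iff hjk (Ne.symm hik)]; omega
  have ne20 : e2 ≠ e0 := by rw [he2, he0, Ne, edg_eq_iff hjk hjt]; omega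
  have ne30 : e3 ≠ e0 := by rw [he3, he0, Ne, edg_eq_iff (Ne.symm hik) hjt]; omega
  have nef12 : f1 ≠ f2 := by rw [hf1, hf2, Ne, edg_eq_iff hij' hjk']; omega
  -- validity of base edges
  have hv1 := edg_val_mem hij hi hj
  have hv2 := edg_val_mem hjk hj hk
  have hv3 := edg_val_mem (Ne.symm hik) hk hi
  have hv0 := edg_val_mem hjt hj ht
  have hvf1 := edg_val_mem hij' hi' hj'
  have hvf2 := edg_val_mem hjk' hj' hk'
  have hc00 : 0 ≤ c0 := edgeP_nonneg hm hj ht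
  have hc0p : c0 ≤ pn α n := edgeP_le_pn hm hj ht
  have hFint := integrable_TqTq (k := k) (k' := k') hm hi hj ht hi' hj' ht'
  have hXv : ∀ (a b : ℕ) (hab : a ≠ b) (ω : Ω n), XE A n (edg a b) ω = A n a b ω :=
    fun a b hab ω => XE_edg hm n hab ω
  -- pointwise data
  have hpn0 : 0 ≤ pn α n := pn_nonneg (α := α) n
  by_cases hI : i' = i ∨ i' = j ∨ i' = k ∨ i' = t <;>
    by_cases hK : k' = i ∨ k' = j ∨ k' = k ∨ k' = t
  · -- both in : 4 edges
    rw [if_pos hI, if_pos hK]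
    have hnm1 : e1 ∉ insert e2 (insert e3 ({e0} : Finset EI)) := by
      simp only [Finset.mem_insert, Finset.mem_singleton]
      push_neg
      exact ⟨ne12, ne13, ne10⟩
    have hnm2 : e2 ∉ insert e3 ({e0} : Finset EI) := by
      simp only [Finset.mem_insert, Finset.mem_singleton]
      push_neg
      exact ⟨ne23, ne20⟩
    have hnm3 : e3 ∉ ({e0} : Finset EI) := by
      simp only [Finset.mem_singleton]
      exact ne30
    have key := abs_integral_le_prodB hm (insert e1 (insert e2 (insert e3 ({e0} : Finset EI))))
      e0 (by simp) ?hval c0 hc00 hc0p _ hFint ?hle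
    case hval =>
      intro e he
      simp only [Finset.mem_insert, Finset.mem_singleton] at he
      rcases he with rfl | rfl | rfl | rfl
      exacts [hv1, hv2, hv3, hv0]
    case hle =>
      intro ω
      rw [Finset.prod_insert hnm1, Finset.prod_insert hnm2, Finset.prod_insert hnm3,
        Finset.prod_singleton, if_neg ne10, if_neg ne20, if_neg ne30, if_pos rfl]
      rw [he1, he2, he3, he0, hXv i j hij, hXv j k hjk, hXv k i (Ne.symm hik), hXv j t hjt]
      rw [Tq, Tq]
      refine le_trans (pointwise_pb (A_nonneg hm n i j ω) (A_nonneg hm n j k ω)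
        (A_nonneg hm n k i ω) (A_nonneg hm n i' j' ω) (A_nonneg hm n j' k' ω)
        (A_nonneg hm n k' i' ω) (A_le_one hm n k' i' ω)
        (abs_Abar_le_one hm hi hj ω) (abs_Abar_le_one hm hi' hj' ω)
        (abs_Abar_le_one hm hj' ht' ω)
        (A_le_one hm n i' j' ω) (A_le_one hm n j' k' ω) zero_le_one zero_le_one)
        (le_of_eq (by rw [hc0]; ring))
    have hcard : (insert e1 (insert e2 (insert e3 ({e0} : Finset EI)))).card = 4 := by
      rw [Finset.card_insert_of_notMem hnm1, Finset.card_insert_of_notMem hnm2,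
        Finset.card_insert_of_notMem hnm3, Finset.card_singleton]
    rw [hcard] at key
    calc |∫ ω, Tq α w A n i j k t ω * Tq α w A n i' j' k' t' ω ∂μ n| ≤ 2 * pn α n ^ 4 := key
      _ = 2 * pn α n ^ 4 * 1 * 1 := by ring
  · -- i' in, k' out : extra edge f2
    rw [if_pos hI, if_neg hK]
    push_neg at hK
    have hf2nm : ∀ e ∈ [e1, e2, e3, e0], f2 ≠ e := by
      intro e he
      simp only [List.mem_cons, List.mem_singleton] at he
      obtain ⟨hK1, hK2, hK3, hK4⟩ := hK
      rcases he with rfl | rfl | rfl | rfl | h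
      · rw [hf2, he1, Ne, edg_eq_iff hjk' hij]; omega
      · rw [hf2, he2, Ne, edg_eq_iff hjk' hjk]; omega
      · rw [hf2, he3, Ne, edg_eq_iff hjk' (Ne.symm hik)]; omega
      · rw [hf2, he0, Ne, edg_eq_iff hjk' hjt]; omega
      · exact absurd h List.not_mem_nil
    have hnm1 : e1 ∉ insert e2 (insert e3 ({e0} : Finset EI)) := by
      simp only [Finset.mem_insert, Finset.mem_singleton]
      push_neg
      exact ⟨ne12, ne13, ne10⟩
    have hnm2 : e2 ∉ insert e3 ({e0} : Finset EI) := by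
      simp only [Finset.mem_insert, Finset.mem_singleton]
      push_neg
      exact ⟨ne23, ne20⟩
    have hnm3 : e3 ∉ ({e0} : Finset EI) := by
      simp only [Finset.mem_singleton]
      exact ne30
    have hnmf2 : f2 ∉ insert e1 (insert e2 (insert e3 ({e0} : Finset EI))) := by
      simp only [Finset.mem_insert, Finset.mem_singleton]
      push_neg
      exact ⟨hf2nm e1 (by simp), hf2nm e2 (by simp), hf2nm e3 (by simp), hf2nm e0 (by simp)⟩
    have key := abs_integral_le_prodB hm
      (insert f2 (insert e1 (insert e2 (insert e3 ({e0} : Finset EI)))))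
      e0 (by simp) ?hval c0 hc00 hc0p _ hFint ?hle
    case hval =>
      intro e he
      simp only [Finset.mem_insert, Finset.mem_singleton] at he
      rcases he with rfl | rfl | rfl | rfl | rfl
      exacts [hvf2, hv1, hv2, hv3, hv0]
    case hle =>
      intro ω
      rw [Finset.prod_insert hnmf2, Finset.prod_insert hnm1, Finset.prod_insert hnm2,
        Finset.prod_insert hnm3, Finset.prod_singleton, if_neg (hf2nm e0 (by simp)),
        if_neg ne10, if_neg ne20, if_neg ne30, if_pos rfl]
      rw [hf2, he1, he2, he3, he0, hXv j' k' hjk', hXv i j hij, hXv j k hjk,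
        hXv k i (Ne.symm hik), hXv j t hjt]
      rw [Tq, Tq]
      refine le_trans (pointwise_pb (A_nonneg hm n i j ω) (A_nonneg hm n j k ω)
        (A_nonneg hm n k i ω) (A_nonneg hm n i' j' ω) (A_nonneg hm n j' k' ω)
        (A_nonneg hm n k' i' ω) (A_le_one hm n k' i' ω)
        (abs_Abar_le_one hm hi hj ω) (abs_Abar_le_one hm hi' hj' ω)
        (abs_Abar_le_one hm hj' ht' ω)
        (A_le_one hm n i' j' ω) (le_refl (A n j' k' ω)) zero_le_one (A_nonneg hm n j' k' ω))
        (le_of_eq (by rw [hc0]; ring))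
    have hcard : (insert f2 (insert e1 (insert e2 (insert e3 ({e0} : Finset EI))))).card = 5 := by
      rw [Finset.card_insert_of_notMem hnmf2, Finset.card_insert_of_notMem hnm1,
        Finset.card_insert_of_notMem hnm2, Finset.card_insert_of_notMem hnm3,
        Finset.card_singleton]
    rw [hcard] at key
    calc |∫ ω, Tq α w A n i j k t ω * Tq α w A n i' j' k' t' ω ∂μ n| ≤ 2 * pn α n ^ 5 := key
      _ = 2 * pn α n ^ 4 * 1 * pn α n := by ring
  · -- i' out, k' in : extra edge f1
    rw [if_neg hI, if_pos hK]
    push_neg at hI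
    have hf1nm : ∀ e ∈ [e1, e2, e3, e0], f1 ≠ e := by
      intro e he
      simp only [List.mem_cons, List.mem_singleton] at he
      obtain ⟨hI1, hI2, hI3, hI4⟩ := hI
      rcases he with rfl | rfl | rfl | rfl | h
      · rw [hf1, he1, Ne, edg_eq_iff hij' hij]; omega
      · rw [hf1, he2, Ne, edg_eq_iff hij' hjk]; omega
      · rw [hf1, he3, Ne, edg_eq_iff hij' (Ne.symm hik)]; omega
      · rw [hf1, he0, Ne, edg_eq_iff hij' hjt]; omega
      · exact absurd h List.not_mem_nil
    have hnm1 : e1 ∉ insert e2 (insert e3 ({e0} : Finset EI)) := by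
      simp only [Finset.mem_insert, Finset.mem_singleton]
      push_neg
      exact ⟨ne12, ne13, ne10⟩
    have hnm2 : e2 ∉ insert e3 ({e0} : Finset EI) := by
      simp only [Finset.mem_insert, Finset.mem_singleton]
      push_neg
      exact ⟨ne23, ne20⟩
    have hnm3 : e3 ∉ ({e0} : Finset EI) := by
      simp only [Finset.mem_singleton]
      exact ne30
    have hnmf1 : f1 ∉ insert e1 (insert e2 (insert e3 ({e0} : Finset EI))) := by
      simp only [Finset.mem_insert, Finset.mem_singleton]
      push_neg
      exact ⟨hf1nm e1 (by simp), hf1nm e2 (by simp), hf1nm e3 (by simp), hf1nm e0 (by simp)⟩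
    have key := abs_integral_le_prodB hm
      (insert f1 (insert e1 (insert e2 (insert e3 ({e0} : Finset EI)))))
      e0 (by simp) ?hval c0 hc00 hc0p _ hFint ?hle
    case hval =>
      intro e he
      simp only [Finset.mem_insert, Finset.mem_singleton] at he
      rcases he with rfl | rfl | rfl | rfl | rfl
      exacts [hvf1, hv1, hv2, hv3, hv0]
    case hle =>
      intro ω
      rw [Finset.prod_insert hnmf1, Finset.prod_insert hnm1, Finset.prod_insert hnm2,
        Finset.prod_insert hnm3, Finset.prod_singleton, if_neg (hf1nm e0 (by simp)),
        if_neg ne10, if_neg ne20, if_neg ne30, if_pos rfl]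
      rw [hf1, he1, he2, he3, he0, hXv i' j' hij', hXv i j hij, hXv j k hjk,
        hXv k i (Ne.symm hik), hXv j t hjt]
      rw [Tq, Tq]
      refine le_trans (pointwise_pb (A_nonneg hm n i j ω) (A_nonneg hm n j k ω)
        (A_nonneg hm n k i ω) (A_nonneg hm n i' j' ω) (A_nonneg hm n j' k' ω)
        (A_nonneg hm n k' i' ω) (A_le_one hm n k' i' ω)
        (abs_Abar_le_one hm hi hj ω) (abs_Abar_le_one hm hi' hj' ω)
        (abs_Abar_le_one hm hj' ht' ω)
        (le_refl (A n i' j' ω)) (A_le_one hm n j' k' ω) (A_nonneg hm n i' j' ω) zero_le_one)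
        (le_of_eq (by rw [hc0]; ring))
    have hcard : (insert f1 (insert e1 (insert e2 (insert e3 ({e0} : Finset EI))))).card = 5 := by
      rw [Finset.card_insert_of_notMem hnmf1, Finset.card_insert_of_notMem hnm1,
        Finset.card_insert_of_notMem hnm2, Finset.card_insert_of_notMem hnm3,
        Finset.card_singleton]
    rw [hcard] at key
    calc |∫ ω, Tq α w A n i j k t ω * Tq α w A n i' j' k' t' ω ∂μ n| ≤ 2 * pn α n ^ 5 := key
      _ = 2 * pn α n ^ 4 * pn α n * 1 := by ring
  · -- both out : extra edges f1 f2
    rw [if_neg hI, if_neg hK]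
    push_neg at hI hK
    have hf1nm : ∀ e ∈ [e1, e2, e3, e0], f1 ≠ e := by
      intro e he
      simp only [List.mem_cons, List.mem_singleton] at he
      obtain ⟨hI1, hI2, hI3, hI4⟩ := hI
      rcases he with rfl | rfl | rfl | rfl | h
      · rw [hf1, he1, Ne, edg_eq_iff hij' hij]; omega
      · rw [hf1, he2, Ne, edg_eq_iff hij' hjk]; omega
      · rw [hf1, he3, Ne, edg_eq_iff hij' (Ne.symm hik)]; omega
      · rw [hf1, he0, Ne, edg_eq_iff hij' hjt]; omega
      · exact absurd h List.not_mem_nil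
    have hf2nm : ∀ e ∈ [e1, e2, e3, e0], f2 ≠ e := by
      intro e he
      simp only [List.mem_cons, List.mem_singleton] at he
      obtain ⟨hK1, hK2, hK3, hK4⟩ := hK
      rcases he with rfl | rfl | rfl | rfl | h
      · rw [hf2, he1, Ne, edg_eq_iff hjk' hij]; omega
      · rw [hf2, he2, Ne, edg_eq_iff hjk' hjk]; omega
      · rw [hf2, he3, Ne, edg_eq_iff hjk' (Ne.symm hik)]; omega
      · rw [hf2, he0, Ne, edg_eq_iff hjk' hjt]; omega
      · exact absurd h List.not_mem_nil
    have hnm1 : e1 ∉ insert e2 (insert e3 ({e0} : Finset EI)) := by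
      simp only [Finset.mem_insert, Finset.mem_singleton]
      push_neg
      exact ⟨ne12, ne13, ne10⟩
    have hnm2 : e2 ∉ insert e3 ({e0} : Finset EI) := by
      simp only [Finset.mem_insert, Finset.mem_singleton]
      push_neg
      exact ⟨ne23, ne20⟩
    have hnm3 : e3 ∉ ({e0} : Finset EI) := by
      simp only [Finset.mem_singleton]
      exact ne30
    have hnmf2 : f2 ∉ insert e1 (insert e2 (insert e3 ({e0} : Finset EI))) := by
      simp only [Finset.mem_insert, Finset.mem_singleton]
      push_neg
      exact ⟨hf2nm e1 (by simp), hf2nm e2 (by simp), hf2nm e3 (by simp), hf2nm e0 (by simp)⟩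
    have hnmf1 : f1 ∉ insert f2 (insert e1 (insert e2 (insert e3 ({e0} : Finset EI)))) := by
      simp only [Finset.mem_insert, Finset.mem_singleton]
      push_neg
      exact ⟨nef12, hf1nm e1 (by simp), hf1nm e2 (by simp), hf1nm e3 (by simp),
        hf1nm e0 (by simp)⟩
    have key := abs_integral_le_prodB hm
      (insert f1 (insert f2 (insert e1 (insert e2 (insert e3 ({e0} : Finset EI))))))
      e0 (by simp) ?hval c0 hc00 hc0p _ hFint ?hle
    case hval =>
      intro e he
      simp only [Finset.mem_insert, Finset.mem_singleton] at he
      rcases he with rfl | rfl | rfl | rfl | rfl | rfl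
      exacts [hvf1, hvf2, hv1, hv2, hv3, hv0]
    case hle =>
      intro ω
      rw [Finset.prod_insert hnmf1, Finset.prod_insert hnmf2, Finset.prod_insert hnm1,
        Finset.prod_insert hnm2, Finset.prod_insert hnm3, Finset.prod_singleton,
        if_neg (hf1nm e0 (by simp)), if_neg (hf2nm e0 (by simp)),
        if_neg ne10, if_neg ne20, if_neg ne30, if_pos rfl]
      rw [hf1, hf2, he1, he2, he3, he0, hXv i' j' hij', hXv j' k' hjk', hXv i j hij,
        hXv j k hjk, hXv k i (Ne.symm hik), hXv j t hjt]
      rw [Tq, Tq]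
      refine le_trans (pointwise_pb (A_nonneg hm n i j ω) (A_nonneg hm n j k ω)
        (A_nonneg hm n k i ω) (A_nonneg hm n i' j' ω) (A_nonneg hm n j' k' ω)
        (A_nonneg hm n k' i' ω) (A_le_one hm n k' i' ω)
        (abs_Abar_le_one hm hi hj ω) (abs_Abar_le_one hm hi' hj' ω)
        (abs_Abar_le_one hm hj' ht' ω)
        (le_refl (A n i' j' ω)) (le_refl (A n j' k' ω)) (A_nonneg hm n i' j' ω)
        (A_nonneg hm n j' k' ω))
        (le_of_eq (by rw [hc0]; ring))
    have hcard : (insert f1 (insert f2 (insert e1 (insert e2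
        (insert e3 ({e0} : Finset EI)))))).card = 6 := by
      rw [Finset.card_insert_of_notMem hnmf1, Finset.card_insert_of_notMem hnmf2,
        Finset.card_insert_of_notMem hnm1, Finset.card_insert_of_notMem hnm2,
        Finset.card_insert_of_notMem hnm3, Finset.card_singleton]
    rw [hcard] at key
    calc |∫ ω, Tq α w A n i j k t ω * Tq α w A n i' j' k' t' ω ∂μ n| ≤ 2 * pn α n ^ 6 := key
      _ = 2 * pn α n ^ 4 * pn α n * pn α n := by ring

end Model7
/-- distinctness predicate for quadruples. -/
def okq (x : ℕ × ℕ × ℕ × ℕ) : Prop :=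
  x.2.1 ≠ x.1 ∧ x.2.2.1 ≠ x.1 ∧ x.2.2.1 ≠ x.2.1 ∧ x.2.2.2 ≠ x.1 ∧ x.2.2.2 ≠ x.2.1 ∧
    x.2.2.2 ≠ x.2.2.1

instance : DecidablePred okq := fun x => by unfold okq; infer_instance

/-- vertex membership in a quadruple -/
def memq (x : ℕ × ℕ × ℕ × ℕ) (v : ℕ) : Prop :=
  v = x.1 ∨ v = x.2.1 ∨ v = x.2.2.1 ∨ v = x.2.2.2

instance : ∀ x v, Decidable (memq x v) := fun x v => by unfold memq; infer_instance

def R4 (n : ℕ) : Finset (ℕ × ℕ × ℕ × ℕ) :=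
  Finset.range n ×ˢ (Finset.range n ×ˢ (Finset.range n ×ˢ Finset.range n))

section Model8

variable {Ω : ℕ → Type} [∀ n, MeasurableSpace (Ω n)] {α β : ℝ}
  {μ : ∀ n, Measure (Ω n)} {w : ℕ → ℕ → ℕ → ℝ} {A : ∀ n, ℕ → ℕ → Ω n → ℝ}

/-- the normalized quadruple summand -/
def gq (α : ℝ) (w : ℕ → ℕ → ℕ → ℝ) (A : ∀ n, ℕ → ℕ → Ω n → ℝ) (n : ℕ)
    (x : ℕ × ℕ × ℕ × ℕ) (ω : Ω n) : ℝ :=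
  if okq x then Tq α w A n x.1 x.2.1 x.2.2.1 x.2.2.2 ω / (nu α w n x.1) ^ 2 else 0

/-- the dominating bound for a pair of quadruples -/
def BdF (α β : ℝ) (n : ℕ) (x y : ℕ × ℕ × ℕ × ℕ) : ℝ :=
  (512 * pn α n ^ 4 / (β ^ 8 * (n : ℝ) ^ 8 * pn α n ^ 8)) *
    (if memq x y.1 then 1 else pn α n) * (if memq x y.2.1 then (1 : ℝ) else 0) *
    (if memq x y.2.2.1 then 1 else pn α n) * (if memq x y.2.2.2 then (1 : ℝ) else 0)

lemma mem_R4 {n : ℕ} {x : ℕ × ℕ × ℕ × ℕ} (hx : x ∈ R4 n) :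
    x.1 ∈ Finset.range n ∧ x.2.1 ∈ Finset.range n ∧ x.2.2.1 ∈ Finset.range n ∧
      x.2.2.2 ∈ Finset.range n := by
  simp only [R4, Finset.mem_product] at hx
  exact ⟨hx.1, hx.2.1, hx.2.2.1, hx.2.2.2⟩

lemma nu_lower (hm : IsHeterER α β μ w A) {n : ℕ} (hn : 2 ≤ n) {i : ℕ}
    (hi : i ∈ Finset.range n) :
    (n : ℝ) ^ 2 * pn α n ^ 2 * β ^ 2 / 4 ≤ nu α w n i := by
  have h1 := nu_ge hm hi
  have hN : (2 : ℝ) ≤ (n : ℝ) := by exact_mod_cast hn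
  have hp := pn_nonneg (α := α) n
  have hb := le_of_lt hm.beta_mem.1
  have hhalf : (n : ℝ) / 2 ≤ (n : ℝ) - 1 := by linarith
  have hsq : ((n : ℝ) / 2) ^ 2 ≤ ((n : ℝ) - 1) ^ 2 := by
    apply pow_le_pow_left₀ (by linarith) hhalf
  calc (n : ℝ) ^ 2 * pn α n ^ 2 * β ^ 2 / 4 = ((n : ℝ) / 2) ^ 2 * (pn α n * β) ^ 2 := by ring
    _ ≤ ((n : ℝ) - 1) ^ 2 * (pn α n * β) ^ 2 := by
        apply mul_le_mul_of_nonneg_right hsq (by positivity)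
    _ ≤ nu α w n i := h1

lemma nu_pos (hm : IsHeterER α β μ w A) {n : ℕ} (hn : 2 ≤ n) {i : ℕ}
    (hi : i ∈ Finset.range n) : 0 < nu α w n i := by
  have := nu_lower hm hn hi
  have hp : 0 < pn α n := pn_pos (le_trans one_le_two hn)
  have hb : 0 < β := hm.beta_mem.1
  have hN : (0 : ℝ) < (n : ℝ) := by positivity
  calc (0:ℝ) < (n : ℝ) ^ 2 * pn α n ^ 2 * β ^ 2 / 4 := by positivity
    _ ≤ nu α w n i := this

set_option maxHeartbeats 1000000 in
/-- Per-pair bound. -/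
lemma claimB (hm : IsHeterER α β μ w A) {n : ℕ} (hn : 2 ≤ n) {x y : ℕ × ℕ × ℕ × ℕ}
    (hx : x ∈ R4 n) (hy : y ∈ R4 n) :
    |∫ ω, gq α w A n x ω * gq α w A n y ω ∂μ n| ≤ BdF α β n x y := by
  classical
  obtain ⟨hx1, hx2, hx3, hx4⟩ := mem_R4 hx
  obtain ⟨hy1, hy2, hy3, hy4⟩ := mem_R4 hy
  have hp : 0 < pn α n := pn_pos (le_trans one_le_two hn)
  have hb : 0 < β := hm.beta_mem.1
  have hN : (0 : ℝ) < (n : ℝ) := by positivity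
  have hBd0 : 0 ≤ BdF α β n x y := by
    rw [BdF]
    have h1 : (0:ℝ) ≤ 512 * pn α n ^ 4 / (β ^ 8 * (n : ℝ) ^ 8 * pn α n ^ 8) := by positivity
    split_ifs <;> positivity
  by_cases hox : okq x
  case neg =>
    have : ∀ ω, gq α w A n x ω * gq α w A n y ω = 0 := fun ω => by
      rw [gq, if_neg hox, zero_mul]
    rw [show (fun ω => gq α w A n x ω * gq α w A n y ω) = fun _ => (0:ℝ) from funext this]
    simpa using hBd0
  by_cases hoy : okq y
  case neg =>
    have : ∀ ω, gq α w A n x ω * gq α w A n y ω = 0 := fun ω => by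
      rw [gq, gq, if_neg hoy, mul_zero]
    rw [show (fun ω => gq α w A n x ω * gq α w A n y ω) = fun _ => (0:ℝ) from funext this]
    simpa using hBd0
  obtain ⟨ho1, ho2, ho3, ho4, ho5, ho6⟩ := hox
  obtain ⟨ho1', ho2', ho3', ho4', ho5', ho6'⟩ := hoy
  -- rewrite the integral
  have hre : ∀ ω, gq α w A n x ω * gq α w A n y ω =
      (Tq α w A n x.1 x.2.1 x.2.2.1 x.2.2.2 ω * Tq α w A n y.1 y.2.1 y.2.2.1 y.2.2.2 ω) *
        ((nu α w n x.1) ^ 2 * (nu α w n y.1) ^ 2)⁻¹ := by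
    intro ω
    rw [gq, gq, if_pos ⟨ho1, ho2, ho3, ho4, ho5, ho6⟩, if_pos ⟨ho1', ho2', ho3', ho4', ho5', ho6'⟩]
    rw [div_eq_mul_inv, div_eq_mul_inv, mul_inv]
    ring
  have hint : ∫ ω, gq α w A n x ω * gq α w A n y ω ∂μ n =
      (∫ ω, Tq α w A n x.1 x.2.1 x.2.2.1 x.2.2.2 ω * Tq α w A n y.1 y.2.1 y.2.2.1 y.2.2.2 ω ∂μ n)
        * ((nu α w n x.1) ^ 2 * (nu α w n y.1) ^ 2)⁻¹ := by
    rw [show (fun ω => gq α w A n x ω * gq α w A n y ω) = fun ω =>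
      (Tq α w A n x.1 x.2.1 x.2.2.1 x.2.2.2 ω * Tq α w A n y.1 y.2.1 y.2.2.1 y.2.2.2 ω) *
        ((nu α w n x.1) ^ 2 * (nu α w n y.1) ^ 2)⁻¹ from funext hre]
    exact integral_mul_const _ _
  have hnux := nu_pos hm hn hx1
  have hnuy := nu_pos hm hn hy1
  have hinvpos : (0:ℝ) < ((nu α w n x.1) ^ 2 * (nu α w n y.1) ^ 2)⁻¹ := by positivity
  by_cases hmem : memq x y.2.1 ∧ memq x y.2.2.2
  case neg =>
    -- vanishing
    have hzero : ∫ ω, Tq α w A n x.1 x.2.1 x.2.2.1 x.2.2.2 ω *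
        Tq α w A n y.1 y.2.1 y.2.2.1 y.2.2.2 ω ∂μ n = 0 := by
      apply vanish hm hx1 hx2 hx3 hx4 hy1 hy2 hy3 hy4
        (Ne.symm ho1) (Ne.symm ho2) (Ne.symm ho4) (Ne.symm ho3) (Ne.symm ho5) (Ne.symm ho6)
        (Ne.symm ho1') (Ne.symm ho2') (Ne.symm ho4') (Ne.symm ho3') (Ne.symm ho5')
        (Ne.symm ho6')
      rw [not_and_or] at hmem
      rcases hmem with h | h
      · left
        rw [memq] at h
        push_neg at h
        exact ⟨h.1, h.2.1, h.2.2.1, h.2.2.2⟩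
      · right
        rw [memq] at h
        push_neg at h
        exact ⟨h.1, h.2.1, h.2.2.1, h.2.2.2⟩
    rw [hint, hzero, zero_mul, abs_zero]
    exact hBd0
  case pos =>
    obtain ⟨hmj, hmt⟩ := hmem
    have hTb := Tq_bound hm hx1 hx2 hx3 hx4 hy1 hy2 hy3 hy4
      (Ne.symm ho1) (Ne.symm ho2) (Ne.symm ho4) (Ne.symm ho3) (Ne.symm ho5) (Ne.symm ho6)
      (Ne.symm ho1') (Ne.symm ho2') (Ne.symm ho4') (Ne.symm ho3') (Ne.symm ho5') (Ne.symm ho6')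
    -- bound on inverse of nu squared product
    have hq : (0:ℝ) < (n : ℝ) ^ 2 * pn α n ^ 2 * β ^ 2 / 4 := by positivity
    have hqx := nu_lower hm hn hx1
    have hqy := nu_lower hm hn hy1
    have hprod : ((n : ℝ) ^ 2 * pn α n ^ 2 * β ^ 2 / 4) ^ 4 ≤
        (nu α w n x.1) ^ 2 * (nu α w n y.1) ^ 2 := by
      have h1 : ((n : ℝ) ^ 2 * pn α n ^ 2 * β ^ 2 / 4) ^ 2 ≤ (nu α w n x.1) ^ 2 :=
        pow_le_pow_left₀ (le_of_lt hq) hqx 2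
      have h2 : ((n : ℝ) ^ 2 * pn α n ^ 2 * β ^ 2 / 4) ^ 2 ≤ (nu α w n y.1) ^ 2 :=
        pow_le_pow_left₀ (le_of_lt hq) hqy 2
      calc ((n : ℝ) ^ 2 * pn α n ^ 2 * β ^ 2 / 4) ^ 4
          = ((n : ℝ) ^ 2 * pn α n ^ 2 * β ^ 2 / 4) ^ 2 *
            ((n : ℝ) ^ 2 * pn α n ^ 2 * β ^ 2 / 4) ^ 2 := by ring
        _ ≤ (nu α w n x.1) ^ 2 * (nu α w n y.1) ^ 2 := by
            apply mul_le_mul h1 h2 (by positivity) (by positivity)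
    have hinvle : ((nu α w n x.1) ^ 2 * (nu α w n y.1) ^ 2)⁻¹ ≤
        256 / (β ^ 8 * (n : ℝ) ^ 8 * pn α n ^ 8) := by
      have h1 : ((nu α w n x.1) ^ 2 * (nu α w n y.1) ^ 2)⁻¹ ≤
          (((n : ℝ) ^ 2 * pn α n ^ 2 * β ^ 2 / 4) ^ 4)⁻¹ := by
        apply inv_anti₀ (by positivity) hprod
      refine le_trans h1 (le_of_eq ?_)
      rw [show ((n : ℝ) ^ 2 * pn α n ^ 2 * β ^ 2 / 4) ^ 4 =
        β ^ 8 * (n : ℝ) ^ 8 * pn α n ^ 8 / 256 by ring]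
      rw [inv_div]
    -- combine
    rw [hint, abs_mul, abs_of_pos hinvpos]
    calc |∫ ω, Tq α w A n x.1 x.2.1 x.2.2.1 x.2.2.2 ω *
          Tq α w A n y.1 y.2.1 y.2.2.1 y.2.2.2 ω ∂μ n| *
          ((nu α w n x.1) ^ 2 * (nu α w n y.1) ^ 2)⁻¹
        ≤ (2 * pn α n ^ 4 * (if memq x y.1 then 1 else pn α n) *
            (if memq x y.2.2.1 then 1 else pn α n)) *
          (256 / (β ^ 8 * (n : ℝ) ^ 8 * pn α n ^ 8)) := by
          apply mul_le_mul ?_ hinvle (le_of_lt hinvpos) ?_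
          · exact le_trans hTb (le_of_eq rfl)
          · split_ifs <;> positivity
      _ = BdF α β n x y := by
          rw [BdF, if_pos hmj, if_pos hmt]
          ring

end Model8
section Model9

variable {Ω : ℕ → Type} [∀ n, MeasurableSpace (Ω n)] {α β : ℝ}
  {μ : ∀ n, Measure (Ω n)} {w : ℕ → ℕ → ℕ → ℝ} {A : ∀ n, ℕ → ℕ → Ω n → ℝ}

lemma sum_prod_mul {γ : Type*} {s : Finset ℕ} {T : Finset γ} (f : ℕ → ℝ) (g : γ → ℝ) :
    ∑ y ∈ s ×ˢ T, f y.1 * g y.2 = (∑ v ∈ s, f v) * (∑ z ∈ T, g z) := by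
  rw [Finset.sum_product, Finset.sum_mul]
  refine Finset.sum_congr rfl (fun i _ => ?_)
  dsimp only
  rw [← Finset.mul_sum]

lemma sum_ind_le {n : ℕ} (x : ℕ × ℕ × ℕ × ℕ) :
    ∑ v ∈ Finset.range n, (if memq x v then (1:ℝ) else 0) ≤ 4 := by
  classical
  have hle : ∀ v ∈ Finset.range n, (if memq x v then (1:ℝ) else 0) ≤
      (if v = x.1 then (1:ℝ) else 0) + (if v = x.2.1 then (1:ℝ) else 0) +
      (if v = x.2.2.1 then (1:ℝ) else 0) + (if v = x.2.2.2 then (1:ℝ) else 0) := by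
    intro v _
    by_cases h : memq x v
    · rw [if_pos h]
      have h0 : ∀ (c : Prop) (_ : Decidable c), (0:ℝ) ≤ if c then (1:ℝ) else 0 := by
        intro c hc; split_ifs <;> norm_num
      rcases h with h | h | h | h <;> rw [if_pos h] <;>
        [skip; skip; skip; skip] <;>
        first
          | linarith [h0 (v = x.2.1) inferInstance, h0 (v = x.2.2.1) inferInstance,
              h0 (v = x.2.2.2) inferInstance, h0 (v = x.1) inferInstance]
    · rw [if_neg h]
      have h0 : ∀ (c : Prop) (_ : Decidable c), (0:ℝ) ≤ if c then (1:ℝ) else 0 := by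
        intro c hc; split_ifs <;> norm_num
      linarith [h0 (v = x.2.1) inferInstance, h0 (v = x.2.2.1) inferInstance,
        h0 (v = x.2.2.2) inferInstance, h0 (v = x.1) inferInstance]
  refine le_trans (Finset.sum_le_sum hle) ?_
  rw [Finset.sum_add_distrib, Finset.sum_add_distrib, Finset.sum_add_distrib]
  have hone : ∀ a : ℕ, ∑ v ∈ Finset.range n, (if v = a then (1:ℝ) else 0) ≤ 1 := by
    intro a
    rw [Finset.sum_ite_eq' (Finset.range n) a (fun _ => (1:ℝ))]
    split_ifs <;> norm_num
  linarith [hone x.1, hone x.2.1, hone x.2.2.1, hone x.2.2.2]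

lemma sum_indp_le (hα : α < 1) {n : ℕ} (hn : 1 ≤ n) (x : ℕ × ℕ × ℕ × ℕ) :
    ∑ v ∈ Finset.range n, (if memq x v then (1:ℝ) else pn α n) ≤
      5 * ((n : ℝ) * pn α n) := by
  classical
  have hp : 0 ≤ pn α n := pn_nonneg (α := α) n
  have h1 : ∀ v ∈ Finset.range n, (if memq x v then (1:ℝ) else pn α n) ≤
      (if memq x v then (1:ℝ) else 0) + pn α n := by
    intro v _
    split_ifs <;> linarith
  refine le_trans (Finset.sum_le_sum h1) ?_
  rw [Finset.sum_add_distrib, Finset.sum_const, Finset.card_range, nsmul_eq_mul]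
  have h2 := sum_ind_le (n := n) x
  have h3 : (1:ℝ) ≤ (n:ℝ) * pn α n := one_le_npn hα hn
  linarith

lemma sum_BdF_le (hm : IsHeterER α β μ w A) (hα : α < 1) {n : ℕ} (hn : 2 ≤ n)
    (x : ℕ × ℕ × ℕ × ℕ) :
    ∑ y ∈ R4 n, BdF α β n x y ≤ 204800 / (β ^ 8 * (n : ℝ) ^ 6 * pn α n ^ 2) := by
  classical
  have hn1 : 1 ≤ n := le_trans one_le_two hn
  have hp : 0 < pn α n := pn_pos hn1
  have hb : 0 < β := hm.beta_mem.1
  have hN : (0 : ℝ) < (n : ℝ) := by positivity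
  set c := 512 * pn α n ^ 4 / (β ^ 8 * (n : ℝ) ^ 8 * pn α n ^ 8) with hc
  have hc0 : 0 ≤ c := by rw [hc]; positivity
  set f1 : ℕ → ℝ := fun v => if memq x v then (1:ℝ) else pn α n with hf1
  set f2 : ℕ → ℝ := fun v => if memq x v then (1:ℝ) else 0 with hf2
  have hkey : ∑ y ∈ R4 n, BdF α β n x y =
      c * ((∑ v ∈ Finset.range n, f1 v) * ((∑ v ∈ Finset.range n, f2 v) *
        ((∑ v ∈ Finset.range n, f1 v) * (∑ v ∈ Finset.range n, f2 v)))) := by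
    have hterm : ∀ y : ℕ × ℕ × ℕ × ℕ, BdF α β n x y =
        c * (f1 y.1 * (f2 y.2.1 * (f1 y.2.2.1 * f2 y.2.2.2))) := by
      intro y
      rw [BdF, hc, hf1, hf2]
      ring
    rw [Finset.sum_congr rfl (fun y _ => hterm y), ← Finset.mul_sum]
    congr 1
    rw [R4]
    rw [show (fun y : ℕ × ℕ × ℕ × ℕ => f1 y.1 * (f2 y.2.1 * (f1 y.2.2.1 * f2 y.2.2.2))) =
      (fun y : ℕ × ℕ × ℕ × ℕ => f1 y.1 * ((fun z : ℕ × ℕ × ℕ =>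
        f2 z.1 * (f1 z.2.1 * f2 z.2.2)) y.2)) from rfl]
    rw [sum_prod_mul f1 (fun z : ℕ × ℕ × ℕ => f2 z.1 * (f1 z.2.1 * f2 z.2.2))]
    congr 1
    rw [sum_prod_mul f2 (fun z : ℕ × ℕ => f1 z.1 * f2 z.2)]
    congr 1
    rw [sum_prod_mul f1 f2]
  rw [hkey]
  have hS1 : ∑ v ∈ Finset.range n, f1 v ≤ 5 * ((n:ℝ) * pn α n) := sum_indp_le hα hn1 x
  have hS2 : ∑ v ∈ Finset.range n, f2 v ≤ 4 := sum_ind_le x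
  have hS1n : 0 ≤ ∑ v ∈ Finset.range n, f1 v := by
    apply Finset.sum_nonneg; intro v _; simp only [hf1]; split_ifs <;> [norm_num; exact le_of_lt hp]
  have hS2n : 0 ≤ ∑ v ∈ Finset.range n, f2 v := by
    apply Finset.sum_nonneg; intro v _; simp only [hf2]; split_ifs <;> norm_num
  calc c * ((∑ v ∈ Finset.range n, f1 v) * ((∑ v ∈ Finset.range n, f2 v) *
        ((∑ v ∈ Finset.range n, f1 v) * (∑ v ∈ Finset.range n, f2 v))))
      ≤ c * ((5 * ((n:ℝ) * pn α n)) * (4 * ((5 * ((n:ℝ) * pn α n)) * 4))) := by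
        gcongr
    _ = 204800 / (β ^ 8 * (n : ℝ) ^ 6 * pn α n ^ 2) := by
        rw [hc]
        field_simp
        ring

end Model9
section Model10

variable {Ω : ℕ → Type} [∀ n, MeasurableSpace (Ω n)] {α β : ℝ}
  {μ : ∀ n, Measure (Ω n)} {w : ℕ → ℕ → ℕ → ℝ} {A : ∀ n, ℕ → ℕ → Ω n → ℝ}

lemma stat11_eq (n : ℕ) (ω : Ω n) :
    stat11 α w A n ω = ((n : ℝ))⁻¹ * ∑ x ∈ R4 n, gq α w A n x ω := by
  classical
  rw [stat11]
  congr 1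
  rw [R4, Finset.sum_product]
  refine Finset.sum_congr rfl (fun i hi => ?_)
  rw [Finset.sum_product]
  have hj0 : ∀ j, j = i →
      (∑ z ∈ Finset.range n ×ˢ Finset.range n, gq α w A n (i, j, z) ω) = 0 := by
    intro j hj
    refine Finset.sum_eq_zero (fun z _ => ?_)
    rw [gq, if_neg]
    rw [okq]
    simp [hj]
  have hstep1 : ∑ j ∈ Finset.range n, ∑ z ∈ Finset.range n ×ˢ Finset.range n,
      gq α w A n (i, j, z) ω = ∑ j ∈ (Finset.range n).erase i,
      ∑ z ∈ Finset.range n ×ˢ Finset.range n, gq α w A n (i, j, z) ω := by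
    refine (Finset.sum_subset (Finset.erase_subset i (Finset.range n)) (fun j hj hnj => ?_)).symm
    have : j = i := by
      by_contra hne
      exact hnj (Finset.mem_erase.mpr ⟨hne, hj⟩)
    exact hj0 j this
  rw [hstep1]
  refine Finset.sum_congr rfl (fun j hj => ?_)
  have hji : j ≠ i := (Finset.mem_erase.mp hj).1
  have hjr : j ∈ Finset.range n := (Finset.mem_erase.mp hj).2
  rw [Finset.sum_product]
  have hk0 : ∀ k, (k = i ∨ k = j) →
      (∑ u ∈ Finset.range n, gq α w A n (i, j, k, u) ω) = 0 := by
    intro k hk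
    refine Finset.sum_eq_zero (fun u _ => ?_)
    rw [gq, if_neg]
    rw [okq]
    rcases hk with rfl | rfl <;> simp
  have hstep2 : ∑ k ∈ Finset.range n, ∑ u ∈ Finset.range n, gq α w A n (i, j, k, u) ω =
      ∑ k ∈ ((Finset.range n).erase i).erase j, ∑ u ∈ Finset.range n,
        gq α w A n (i, j, k, u) ω := by
    refine (Finset.sum_subset (fun k hk => Finset.mem_of_mem_erase
      (Finset.mem_of_mem_erase hk)) (fun k hk hnk => ?_)).symm
    have : k = i ∨ k = j := by
      by_contra hne
      push_neg at hne
      exact hnk (Finset.mem_erase.mpr ⟨hne.2, Finset.mem_erase.mpr ⟨hne.1, hk⟩⟩)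
    exact hk0 k this
  rw [hstep2]
  refine Finset.sum_congr rfl (fun k hk => ?_)
  have hkj : k ≠ j := (Finset.mem_erase.mp hk).1
  have hki : k ≠ i := (Finset.mem_erase.mp (Finset.mem_of_mem_erase hk)).1
  have hkr : k ∈ Finset.range n := Finset.mem_of_mem_erase (Finset.mem_of_mem_erase hk)
  have ht0 : ∀ u, (u = i ∨ u = j ∨ u = k) → gq α w A n (i, j, k, u) ω = 0 := by
    intro u hu
    rw [gq, if_neg]
    rw [okq]
    rcases hu with rfl | rfl | rfl <;> simp
  have hstep3 : ∑ u ∈ Finset.range n, gq α w A n (i, j, k, u) ω =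
      ∑ u ∈ (((Finset.range n).erase i).erase j).erase k, gq α w A n (i, j, k, u) ω := by
    refine (Finset.sum_subset (fun u hu => Finset.mem_of_mem_erase (Finset.mem_of_mem_erase
      (Finset.mem_of_mem_erase hu))) (fun u hu hnu => ?_)).symm
    have : u = i ∨ u = j ∨ u = k := by
      by_contra hne
      push_neg at hne
      exact hnu (Finset.mem_erase.mpr ⟨hne.2.2, Finset.mem_erase.mpr ⟨hne.2.1,
        Finset.mem_erase.mpr ⟨hne.1, hu⟩⟩⟩)
    exact ht0 u this
  rw [hstep3]
  refine Finset.sum_congr rfl (fun u hu => ?_)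
  have hui : u ≠ i := (Finset.mem_erase.mp (Finset.mem_of_mem_erase
    (Finset.mem_of_mem_erase hu))).1
  have huj : u ≠ j := (Finset.mem_erase.mp (Finset.mem_of_mem_erase hu)).1
  have huk : u ≠ k := (Finset.mem_erase.mp hu).1
  rw [gq, if_pos]
  · rfl
  · exact ⟨hji, hki, hkj, hui, huj, huk⟩

lemma integrable_gg (hm : IsHeterER α β μ w A) {n : ℕ} {x y : ℕ × ℕ × ℕ × ℕ}
    (hx : x ∈ R4 n) (hy : y ∈ R4 n) :
    Integrable (fun ω => gq α w A n x ω * gq α w A n y ω) (μ n) := by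
  classical
  have := hm.prob n
  obtain ⟨hx1, hx2, hx3, hx4⟩ := mem_R4 hx
  obtain ⟨hy1, hy2, hy3, hy4⟩ := mem_R4 hy
  by_cases hox : okq x
  · by_cases hoy : okq y
    · have heq : (fun ω => gq α w A n x ω * gq α w A n y ω) = fun ω =>
          (Tq α w A n x.1 x.2.1 x.2.2.1 x.2.2.2 ω * Tq α w A n y.1 y.2.1 y.2.2.1 y.2.2.2 ω) *
            ((nu α w n x.1) ^ 2 * (nu α w n y.1) ^ 2)⁻¹ := by
        funext ω
        rw [gq, gq, if_pos hox, if_pos hoy, div_eq_mul_inv, div_eq_mul_inv, mul_inv]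
        ring
      rw [heq]
      exact (integrable_TqTq (k := x.2.2.1) (k' := y.2.2.1) hm hx1 hx2 hx4 hy1 hy2 hy4).mul_const _
    · have heq : (fun ω => gq α w A n x ω * gq α w A n y ω) = fun _ => (0:ℝ) := by
        funext ω; rw [gq, gq, if_neg hoy, mul_zero]
      rw [heq]; exact integrable_const 0
  · have heq : (fun ω => gq α w A n x ω * gq α w A n y ω) = fun _ => (0:ℝ) := by
      funext ω; rw [gq, if_neg hox, zero_mul]
    rw [heq]; exact integrable_const 0

lemma integral_stat11_sq (hm : IsHeterER α β μ w A) (n : ℕ) :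
    ∫ ω, (stat11 α w A n ω) ^ 2 ∂μ n =
      ((n : ℝ))⁻¹ ^ 2 * ∑ x ∈ R4 n, ∑ y ∈ R4 n, ∫ ω, gq α w A n x ω * gq α w A n y ω ∂μ n := by
  classical
  have hpt : ∀ ω, (stat11 α w A n ω) ^ 2 = ((n : ℝ))⁻¹ ^ 2 *
      ∑ x ∈ R4 n, ∑ y ∈ R4 n, gq α w A n x ω * gq α w A n y ω := by
    intro ω
    rw [stat11_eq n ω, mul_pow, sq (∑ x ∈ R4 n, gq α w A n x ω), Finset.sum_mul_sum]
  rw [show (fun ω => (stat11 α w A n ω) ^ 2) = fun ω => ((n : ℝ))⁻¹ ^ 2 *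
      ∑ x ∈ R4 n, ∑ y ∈ R4 n, gq α w A n x ω * gq α w A n y ω from funext hpt]
  rw [integral_const_mul]
  congr 1
  rw [integral_finset_sum _ (fun x hx => integrable_finset_sum _
    (fun y hy => integrable_gg hm hx hy))]
  exact Finset.sum_congr rfl (fun x hx => integral_finset_sum _
    (fun y hy => integrable_gg hm hx hy))

end Model10
/-- Second moment bound `E[stat11²] = O(1/(n²(n p_n)²))`. -/
theorem stat11_second_moment
    {Ω : ℕ → Type} [∀ n, MeasurableSpace (Ω n)] (α β : ℝ)
    (μ : ∀ n, Measure (Ω n)) (w : ℕ → ℕ → ℕ → ℝ) (A : ∀ n, ℕ → ℕ → Ω n → ℝ)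
    (hmodel : IsHeterER α β μ w A) :
    ∃ C : ℝ, 0 < C ∧ ∃ N : ℕ, ∀ n ≥ N,
      (∫ ω, (stat11 α w A n ω) ^ 2 ∂μ n) ≤ C / ((n : ℝ) ^ 2 * ((n : ℝ) * pn α n) ^ 2) := by
  classical
  have hα1 : α < 1 := hmodel.alpha_mem.2
  have hb : 0 < β := hmodel.beta_mem.1
  refine ⟨204800 / β ^ 8, by positivity, 2, fun n hn => ?_⟩
  have hn1 : 1 ≤ n := le_trans one_le_two hn
  have hp : 0 < pn α n := pn_pos hn1
  have hN : (0:ℝ) < (n : ℝ) := by exact_mod_cast Nat.lt_of_lt_of_le Nat.zero_lt_one hn1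
  have hcard : ((R4 n).card : ℝ) = (n : ℝ) ^ 4 := by
    rw [R4]
    push_cast [Finset.card_product, Finset.card_range]
    ring
  rw [integral_stat11_sq hmodel n]
  have hK : ∑ x ∈ R4 n, ∑ y ∈ R4 n, ∫ ω, gq α w A n x ω * gq α w A n y ω ∂μ n ≤
      (n : ℝ) ^ 4 * (204800 / (β ^ 8 * (n : ℝ) ^ 6 * pn α n ^ 2)) := by
    have hx1 : ∀ x ∈ R4 n, (∑ y ∈ R4 n, ∫ ω, gq α w A n x ω * gq α w A n y ω ∂μ n) ≤
        204800 / (β ^ 8 * (n : ℝ) ^ 6 * pn α n ^ 2) := fun x hx =>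
      le_trans (Finset.sum_le_sum (fun y _hy =>
        le_trans (le_abs_self _) (claimB hmodel hn hx _hy))) (sum_BdF_le hmodel hα1 hn x)
    refine le_trans (Finset.sum_le_sum hx1) (le_of_eq ?_)
    rw [Finset.sum_const, nsmul_eq_mul, hcard]
  calc ((n : ℝ))⁻¹ ^ 2 * ∑ x ∈ R4 n, ∑ y ∈ R4 n, ∫ ω, gq α w A n x ω * gq α w A n y ω ∂μ n
      ≤ ((n : ℝ))⁻¹ ^ 2 * ((n : ℝ) ^ 4 * (204800 / (β ^ 8 * (n : ℝ) ^ 6 * pn α n ^ 2))) :=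
        mul_le_mul_of_nonneg_left hK (by positivity)
    _ = 204800 / β ^ 8 / ((n : ℝ) ^ 2 * ((n : ℝ) * pn α n) ^ 2) := by
        field_simp
end
end
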